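/- arXiv:2109.10386 — 6 statements merged into one kernel-verified Lean document; each statement's English description precedes it below -/
import Mathlib

section
/- Let (W, S) be a Coxeter system and let M be the wall determined by the reflection γ = w s w⁻¹ (w ∈ W, s ∈ S), i.e., M is the set of edges of the Cayley graph preserved by left multiplication by γ. Suppose ℓ(w) < ℓ(ws). Then for every v ∈ W, the graph distance from v to w is less than the graph distance from v to ws if and only if ℓ(v) < ℓ(γ v). -/
open CoxeterSystem List

noncomputable section
open Classical

namespace Stmt3Aux

variable {B W : Type*} [Group W] {M : CoxeterMatrix B} (cs : CoxeterSystem M W)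

def par (n : ℕ) : Bool := decide (n % 2 = 1)

lemma par_add (a b : ℕ) : par (a + b) = xor (par a) (par b) := by
  unfold par
  rcases Nat.mod_two_eq_zero_or_one a with h | h <;>
    rcases Nat.mod_two_eq_zero_or_one b with h' | h' <;>
      simp [Nat.add_mod, h, h']

def sigmaFun (i : B) : W × Bool → W × Bool := fun x =>
  (cs.simple i * x.1 * cs.simple i, if x.1 = cs.simple i then !x.2 else x.2)

lemma sigmaFun_involutive (i : B) : Function.Involutive (sigmaFun cs i) := by
  rintro ⟨t, b⟩
  unfold sigmaFun
  have key : ∀ u : W, cs.simple i * (cs.simple i * u * cs.simple i) * cs.simple i = u := by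
    intro u
    simp [mul_assoc, cs.simple_mul_simple_cancel_left, cs.simple_mul_simple_self]
  by_cases ht : t = cs.simple i
  · have h1 : cs.simple i * t * cs.simple i = cs.simple i := by
      rw [ht, cs.simple_mul_simple_cancel_right]
    simp [h1, ht]
  · have h2 : ¬ (cs.simple i * t * cs.simple i = cs.simple i) := by
      intro hc
      apply ht
      have := congrArg (fun y => cs.simple i * y * cs.simple i) hc
      simpa [key, cs.simple_mul_simple_cancel_right] using this
    simp [h2, ht, key]

def sigma (i : B) : Equiv.Perm (W × Bool) := (sigmaFun_involutive cs i).toPerm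

lemma sigma_apply (i : B) (x : W × Bool) :
    sigma cs i x = (cs.simple i * x.1 * cs.simple i,
      if x.1 = cs.simple i then !x.2 else x.2) := rfl

lemma if_flip (c : Prop) [Decidable c] (b : Bool) :
    (if c then !b else b) = xor (decide c) b := by
  by_cases hc : c <;> simp [hc]

lemma sigma_mul_pow_apply (i j : B) (n : ℕ) (x : W × Bool) :
    ((sigma cs i * sigma cs j) ^ n) x =
      ((cs.simple i * cs.simple j) ^ n * x.1 * (cs.simple j * cs.simple i) ^ n,
        xor (par ((List.range (2*n)).countP
          (fun k => decide (x.1 = (cs.simple j * cs.simple i) ^ k * cs.simple j)))) x.2) := by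
  obtain ⟨t, b⟩ := x
  set si := cs.simple i
  set sj := cs.simple j
  set ρ := si * sj with hρ
  set ρ' := sj * si with hρ'
  have hinv : ρ' = ρ⁻¹ := by
    rw [hρ, hρ', mul_inv_rev, cs.inv_simple, cs.inv_simple]
  have hsemi : ∀ m : ℕ, sj * ρ ^ m = ρ' ^ m * sj := by
    intro m
    have : SemiconjBy sj ρ ρ' := by
      unfold SemiconjBy
      rw [hρ, hρ', mul_assoc]
    exact (this.pow_right m)
  induction n with
  | zero => simp [par]
  | succ n ih =>
    have key : ρ' ^ n * sj * ρ ^ n = ρ' ^ (2*n) * sj := by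
      rw [mul_assoc, hsemi, ← mul_assoc, ← pow_add, two_mul]
    have hsjsj : sj * sj = 1 := cs.simple_mul_simple_self j
    have key2 : ρ' ^ n * (sj * si * sj) * ρ ^ n = ρ' ^ (2*n+1) * sj := by
      have h1 : sj * si * sj = ρ' * sj := by rw [hρ']
      have h2 : n + 1 + n = 2*n + 1 := by ring
      calc ρ' ^ n * (sj * si * sj) * ρ ^ n = ρ' ^ (n+1) * (sj * ρ ^ n) := by
            rw [h1, ← mul_assoc, ← pow_succ, mul_assoc]
        _ = ρ' ^ (n+1) * (ρ' ^ n * sj) := by rw [hsemi]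
        _ = ρ' ^ (2*n+1) * sj := by rw [← mul_assoc, ← pow_add, h2]
    have e1 : (ρ ^ n * t * ρ' ^ n = sj) = (t = ρ' ^ (2*n) * sj) := by
      apply propext
      constructor
      · intro hEq
        have ht : t = ρ' ^ n * sj * ρ ^ n := by
          rw [← hEq, hinv]
          group
        rw [ht, key]
      · intro hEq
        rw [hEq, ← key, hinv]
        group
    have e2 : (sj * (ρ ^ n * t * ρ' ^ n) * sj = si) = (t = ρ' ^ (2*n+1) * sj) := by
      apply propext
      constructor
      · intro hEq
        have ht : t = ρ' ^ n * (sj * si * sj) * ρ ^ n := by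
          rw [← hEq, hinv]
          simp only [inv_pow]
          simp [mul_assoc, cs.simple_mul_simple_cancel_left, inv_mul_cancel_left,
            mul_inv_cancel_left, (fun x => by rw [← mul_assoc, hsjsj, one_mul] : ∀ x, sj * (sj * x) = x)]
        rw [ht, key2]
      · intro hEq
        rw [hEq, ← key2, hinv]
        simp only [inv_pow]
        simp [mul_assoc, cs.simple_mul_simple_cancel_left, inv_mul_cancel_left,
          mul_inv_cancel_left, hsjsj, (fun x => by rw [← mul_assoc, hsjsj, one_mul] : ∀ x, sj * (sj * x) = x)]
    rw [pow_succ' (sigma cs i * sigma cs j) n]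
    rw [Equiv.Perm.mul_apply, ih]
    rw [Equiv.Perm.mul_apply, sigma_apply, sigma_apply]
    simp only []
    have hcount : par ((List.range (2*(n+1))).countP
          (fun k => decide (t = ρ' ^ k * sj)))
        = xor (decide (t = ρ' ^ (2*n+1) * sj))
            (xor (decide (t = ρ' ^ (2*n) * sj))
              (par ((List.range (2*n)).countP (fun k => decide (t = ρ' ^ k * sj))))) := by
      have h2n : 2*(n+1) = (2*n + 1) + 1 := by ring
      rw [h2n, List.range_succ, List.range_succ, List.countP_append, List.countP_append,
        par_add, par_add]
      have hs : ∀ m : ℕ, par (List.countP (fun k => decide (t = ρ' ^ k * sj)) [m])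
          = decide (t = ρ' ^ m * sj) := by
        intro m
        by_cases hm : t = ρ' ^ m * sj <;> simp [hm, par]
      rw [hs, hs]
      cases (decide (t = ρ' ^ (2*n+1) * sj)) <;>
        cases (decide (t = ρ' ^ (2*n) * sj)) <;>
          cases (par ((List.range (2*n)).countP (fun k => decide (t = ρ' ^ k * sj)))) <;>
            simp
    refine Prod.ext ?_ ?_
    · show si * (sj * (ρ ^ n * t * ρ' ^ n) * sj) * si = ρ ^ (n+1) * t * ρ' ^ (n+1)
      rw [pow_succ' ρ, pow_succ ρ', hρ, hρ']
      group
    · show (if sj * (ρ ^ n * t * ρ' ^ n) * sj = si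
            then !(if ρ ^ n * t * ρ' ^ n = sj then !(xor _ b) else (xor _ b))
            else (if ρ ^ n * t * ρ' ^ n = sj then !(xor _ b) else (xor _ b))) = _
      rw [if_flip, if_flip, e1, e2, hcount]
      cases (decide (t = ρ' ^ (2*n+1) * sj)) <;>
        cases (decide (t = ρ' ^ (2*n) * sj)) <;>
          cases (par ((List.range (2*n)).countP (fun k => decide (t = ρ' ^ k * sj)))) <;>
            cases b <;> simp

lemma sigma_liftable : ∀ i j : B, (sigma cs i * sigma cs j) ^ (M i j) = 1 := by
  intro i j
  apply Equiv.ext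
  intro x
  rw [sigma_mul_pow_apply]
  have h1 : (cs.simple i * cs.simple j) ^ (M i j) = 1 := cs.simple_mul_simple_pow i j
  have h2 : (cs.simple j * cs.simple i) ^ (M i j) = 1 := cs.simple_mul_simple_pow' i j
  have hcnt : (List.range (2 * M i j)).countP
      (fun k => decide (x.1 = (cs.simple j * cs.simple i) ^ k * cs.simple j))
      = 2 * (List.range (M i j)).countP
          (fun k => decide (x.1 = (cs.simple j * cs.simple i) ^ k * cs.simple j)) := by
    rw [two_mul, List.range_add, List.countP_append, List.countP_map]
    have hshift : List.countP
        ((fun k => decide (x.1 = (cs.simple j * cs.simple i) ^ k * cs.simple j)) ∘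
          (fun k => M i j + k)) (List.range (M i j))
        = List.countP (fun k => decide (x.1 = (cs.simple j * cs.simple i) ^ k * cs.simple j))
            (List.range (M i j)) := by
      apply List.countP_congr
      intro k _
      have : (cs.simple j * cs.simple i) ^ (M i j + k) = (cs.simple j * cs.simple i) ^ k := by
        rw [pow_add, h2, one_mul]
      simp [Function.comp, this]
    rw [hshift]
    omega
  rw [h1, h2, hcnt]
  have hpar : par (2 * (List.range (M i j)).countP
      (fun k => decide (x.1 = (cs.simple j * cs.simple i) ^ k * cs.simple j))) = false := by
    unfold par
    simp [Nat.mul_mod_right]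
  rw [hpar]
  simp

/-- the permutation representation of `W` on `W × Bool` -/
def phi : W →* Equiv.Perm (W × Bool) :=
  cs.lift ⟨fun i => sigma cs i, sigma_liftable cs⟩

lemma phi_simple (i : B) : phi cs (cs.simple i) = sigma cs i :=
  cs.lift_apply_simple _ i

lemma phi_apply_structure (g : W) : ∀ t : W, ∀ b : Bool,
    phi cs g (t, b) = (g * t * g⁻¹, xor ((phi cs g (t, false)).2) b) := by
  induction g using cs.simple_induction with
  | simple i =>
      intro t b
      rw [phi_simple, sigma_apply, sigma_apply]
      rw [cs.inv_simple]
      by_cases ht : t = cs.simple i <;> simp [ht]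
  | one =>
      intro t b
      simp
  | mul g g' ihg ihg' =>
      intro t b
      rw [map_mul, Equiv.Perm.mul_apply, ihg' t b, ihg (g' * t * g'⁻¹)]
      refine Prod.ext ?_ ?_
      · dsimp only
        rw [mul_inv_rev]
        group
      · dsimp only
        have hR : ((phi cs g * phi cs g') (t, false)).2
            = (((phi cs g (g' * t * g'⁻¹, false)).2)
                ^^ ((phi cs g' (t, false)).2)) := by
          conv_lhs => rw [Equiv.Perm.mul_apply, ihg' t false, ihg (g' * t * g'⁻¹)]
          cases ((phi cs g (g' * t * g'⁻¹, false)).2) <;>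
            cases ((phi cs g' (t, false)).2) <;> rfl
        rw [hR]
        cases ((phi cs g (g' * t * g'⁻¹, false)).2) <;>
          cases ((phi cs g' (t, false)).2) <;> cases b <;> rfl

lemma phi_fst (g t : W) (b : Bool) : (phi cs g (t, b)).1 = g * t * g⁻¹ := by
  rw [phi_apply_structure]

/-- the sign cocycle -/
def eta (w t : W) : Bool := (phi cs w⁻¹ (t, false)).2

lemma eta_one (t : W) : eta cs 1 t = false := by
  unfold eta
  simp

lemma eta_mem_leftInvSeq (ω : List B) (t : W) (h : eta cs (cs.wordProd ω) t = true) :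
    t ∈ cs.leftInvSeq ω := by
  induction ω generalizing t with
  | nil => rw [cs.wordProd_nil] at h; rw [eta_one] at h; exact absurd h (by simp)
  | cons a ω ih =>
      unfold eta at h
      rw [cs.wordProd_cons, mul_inv_rev, cs.inv_simple, map_mul, Equiv.Perm.mul_apply,
        phi_simple, sigma_apply] at h
      by_cases hta : t = cs.simple a
      · show t ∈ cs.simple a :: _
        rw [hta]; exact List.mem_cons_self
      · simp only [hta, if_false] at h
        rw [phi_apply_structure] at h
        simp only [Bool.xor_false] at h
        have hmem := ih (cs.simple a * t * cs.simple a) h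
        show t ∈ cs.simple a :: List.map (⇑(MulAut.conj (cs.simple a))) (cs.leftInvSeq ω)
        refine List.mem_cons_of_mem _ ?_
        refine List.mem_map.mpr ⟨cs.simple a * t * cs.simple a, hmem, ?_⟩
        simp [MulAut.conj_apply, cs.inv_simple, mul_assoc,
          cs.simple_mul_simple_cancel_left, cs.simple_mul_simple_self]

lemma length_lt_of_eta (w t : W) (h : eta cs w t = true) :
    cs.length (t * w) < cs.length w := by
  obtain ⟨ω, hred, rfl⟩ := cs.exists_reduced_word' w
  have := cs.isLeftInversion_of_mem_leftInvSeq hred (eta_mem_leftInvSeq cs ω t h)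
  exact this.2

lemma eta_reflection_self {t : W} (ht : cs.IsReflection t) (b : Bool) :
    (phi cs t (t, b)).2 = !b := by
  obtain ⟨v, a, rfl⟩ := ht
  set t := v * cs.simple a * v⁻¹ with htdef
  have hmid : phi cs v⁻¹ (t, b) = (cs.simple a, (phi cs v⁻¹ (t, b)).2) := by
    refine Prod.ext ?_ rfl
    rw [phi_fst, htdef]
    group
  set e := (phi cs v⁻¹ (t, b)).2 with he
  have hcomp : phi cs v (cs.simple a, e) = (t, b) := by
    rw [← hmid, ← Equiv.Perm.mul_apply, ← map_mul, mul_inv_cancel, map_one,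
      Equiv.Perm.one_apply]
  have hsig : phi cs (cs.simple a) (cs.simple a, e) = (cs.simple a, !e) := by
    rw [phi_simple, sigma_apply]
    simp [cs.simple_mul_simple_cancel_right]
  have hphit : phi cs t = phi cs v * phi cs (cs.simple a) * phi cs v⁻¹ := by
    rw [← map_mul, ← map_mul, htdef]
  have h1 : (phi cs v (cs.simple a, e)).2 = b := congrArg Prod.snd hcomp
  rw [phi_apply_structure] at h1
  simp only at h1
  rw [hphit, Equiv.Perm.mul_apply, Equiv.Perm.mul_apply, hmid, hsig,
    phi_apply_structure]
  simp only
  clear_value e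
  cases hn : (phi cs v (cs.simple a, false)).2 <;> cases e <;> cases b <;>
    first
      | rfl
      | (rw [hn] at h1; simp at h1)

lemma length_lt_iff_eta {t : W} (ht : cs.IsReflection t) (w : W) :
    cs.length (t * w) < cs.length w ↔ eta cs w t = true := by
  constructor
  · intro h
    have hwinv : w⁻¹ = (t * w)⁻¹ * t := by
      rw [mul_inv_rev, mul_assoc, ht.inv, ht.mul_self, mul_one]
    have htt : phi cs t (t, false) = (t, true) := by
      refine Prod.ext ?_ (eta_reflection_self cs ht false)
      rw [phi_fst]
      group
    have hE : eta cs (t * w) t = false := by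
      cases hE : eta cs (t * w) t
      · rfl
      · exfalso
        have := length_lt_of_eta cs (t * w) t hE
        rw [← mul_assoc, ht.mul_self, one_mul] at this
        omega
    unfold eta
    rw [hwinv, map_mul, Equiv.Perm.mul_apply, htt, phi_apply_structure]
    have : (phi cs (t * w)⁻¹ (t, false)).2 = false := hE
    rw [this]
    rfl
  · exact length_lt_of_eta cs w t

lemma length_lt_iff_eta_false {t : W} (ht : cs.IsReflection t) (w : W) :
    cs.length w < cs.length (t * w) ↔ eta cs w t = false := by
  have hne := ht.length_mul_right_ne w
  have hiff := length_lt_iff_eta cs ht w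
  constructor
  · intro h
    cases hE : eta cs w t
    · rfl
    · exfalso
      have := hiff.mpr hE
      omega
  · intro hE
    have hnot : ¬ cs.length (t * w) < cs.length w := by
      intro hc
      rw [hiff.mp hc] at hE
      exact absurd hE (by simp)
    omega

lemma eta_eq_of_comp (v t : W) :
    eta cs v t = (phi cs v (v⁻¹ * t * v, false)).2 := by
  have hback : phi cs v⁻¹ (phi cs v (v⁻¹ * t * v, false)) = (v⁻¹ * t * v, false) := by
    rw [← Equiv.Perm.mul_apply, ← map_mul, inv_mul_cancel, map_one, Equiv.Perm.one_apply]
  have h1 : phi cs v (v⁻¹ * t * v, false)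
      = (t, (phi cs v (v⁻¹ * t * v, false)).2) := by
    refine Prod.ext ?_ rfl
    rw [phi_fst]
    group
  rw [h1] at hback
  have h2 := congrArg Prod.snd hback
  rw [phi_apply_structure] at h2
  simp only at h2
  unfold eta
  set c := (phi cs v (v⁻¹ * t * v, false)).2
  set d := (phi cs v⁻¹ (t, false)).2
  clear_value c d
  cases c <;> cases d <;> simp_all

end Stmt3Aux

open Stmt3Aux in
/-- Let `(W, S)` be a Coxeter system, `γ = w s w⁻¹` a reflection with
`ℓ(w) < ℓ(ws)`. Then for every `v ∈ W`, the Cayley-graph distance from `v` to `w`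
(namely `ℓ(v⁻¹ w)`) is less than the distance from `v` to `ws` iff `ℓ(v) < ℓ(γ v)`. -/
theorem stmt_3 {B W : Type*} [Group W] {M : CoxeterMatrix B} (cs : CoxeterSystem M W)
    (w : W) (i : B) (h : cs.length w < cs.length (w * cs.simple i)) (v : W) :
    cs.length (v⁻¹ * w) < cs.length (v⁻¹ * (w * cs.simple i)) ↔
      cs.length v < cs.length ((w * cs.simple i * w⁻¹) * v) := by
  have ht : cs.IsReflection (w * cs.simple i * w⁻¹) := ⟨w, i, rfl⟩
  have ht2 : cs.IsReflection (v⁻¹ * (w * cs.simple i * w⁻¹) * v) := by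
    have := ht.conj v⁻¹
    rwa [inv_inv] at this
  have hx : v⁻¹ * (w * cs.simple i)
      = (v⁻¹ * (w * cs.simple i * w⁻¹) * v) * (v⁻¹ * w) := by
    group
  have htw : (w * cs.simple i * w⁻¹) * w = w * cs.simple i := by
    group
  have hwt : eta cs w (w * cs.simple i * w⁻¹) = false := by
    apply (length_lt_iff_eta_false cs ht w).mp
    rwa [htw]
  have heta : eta cs (v⁻¹ * w) (v⁻¹ * (w * cs.simple i * w⁻¹) * v)
      = eta cs v (w * cs.simple i * w⁻¹) := by
    unfold eta
    have hinv : (v⁻¹ * w)⁻¹ = w⁻¹ * v := by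
      rw [mul_inv_rev, inv_inv]
    rw [hinv, map_mul, Equiv.Perm.mul_apply]
    have h1 : phi cs v (v⁻¹ * (w * cs.simple i * w⁻¹) * v, false)
        = (w * cs.simple i * w⁻¹,
            (phi cs v (v⁻¹ * (w * cs.simple i * w⁻¹) * v, false)).2) := by
      refine Prod.ext ?_ rfl
      rw [phi_fst]
      group
    rw [h1, phi_apply_structure]
    have hwt' : (phi cs w⁻¹ (w * cs.simple i * w⁻¹, false)).2 = false := hwt
    rw [hwt']
    have := eta_eq_of_comp cs v (w * cs.simple i * w⁻¹)
    unfold eta at this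
    rw [this]
    simp
  rw [hx]
  rw [length_lt_iff_eta_false cs ht2 (v⁻¹ * w), length_lt_iff_eta_false cs ht v, heta]
end
end

section
/- Let (W, S) be a Coxeter system and M a wall, with V(M) the set of endpoints of edges in M. Let W_M := {w ∈ W : left multiplication by w maps V(M) onto V(M)}. Then for any two edges (w, ws) and (v, vs) of M corresponding to the same generator s ∈ S, the element v w⁻¹ lies in W_M; consequently W_M acts on V(M) with at most |S| orbits, and the orbit of a vertex w with (w, ws) ∈ M is exactly {v ∈ V(M) : (v, vs) ∈ M}. -/
set_option linter.unusedSectionVars false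

namespace CoxStmt5

open Real CoxeterSystem

noncomputable section

variable {B : Type*} [Fintype B] [DecidableEq B]

/-- Simple "root" basis vector. -/
def al (a : B) : B → ℝ := Pi.single a 1

@[simp] lemma al_same (a : B) : al a a = 1 := Pi.single_eq_same a 1

lemma al_ne {a d : B} (h : d ≠ a) : al (B := B) a d = 0 := Pi.single_eq_of_ne h 1

variable (M : CoxeterMatrix B)

/-- Cosine matrix. -/
def kappa (a b : B) : ℝ := - Real.cos (π / (M a b : ℕ))

lemma kappa_symm (a b : B) : kappa M a b = kappa M b a := by
  unfold kappa; rw [M.symmetric a b]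

@[simp] lemma kappa_self (a : B) : kappa M a a = 1 := by
  unfold kappa; rw [M.diagonal a]; norm_num

/-- Pairing of a simple root with a vector. -/
def KK (a : B) (v : B → ℝ) : ℝ := ∑ b, kappa M a b * v b

lemma KK_add (a : B) (u v : B → ℝ) : KK M a (u + v) = KK M a u + KK M a v := by
  simp [KK, mul_add, Finset.sum_add_distrib]

lemma KK_sub (a : B) (u v : B → ℝ) : KK M a (u - v) = KK M a u - KK M a v := by
  simp [KK, mul_sub, Finset.sum_sub_distrib]

lemma KK_smul (a : B) (r : ℝ) (v : B → ℝ) : KK M a (r • v) = r * KK M a v := by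
  simp only [KK, Pi.smul_apply, smul_eq_mul, Finset.mul_sum]
  exact Finset.sum_congr rfl fun x _ => by ring

@[simp] lemma KK_al (a b : B) : KK M a (al b) = kappa M a b := by
  unfold KK al
  rw [Finset.sum_eq_single b]
  · simp
  · intro x _ hx
    simp [Pi.single_eq_of_ne hx]
  · simp

/-- The bilinear form. -/
def kf (u v : B → ℝ) : ℝ := ∑ a, u a * KK M a v

@[simp] lemma kf_al_left (a : B) (v : B → ℝ) : kf M (al a) v = KK M a v := by
  unfold kf al
  rw [Finset.sum_eq_single a]
  · simp
  · intro x _ hx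
    simp [Pi.single_eq_of_ne hx]
  · simp

lemma kf_symm (u v : B → ℝ) : kf M u v = kf M v u := by
  unfold kf KK
  simp only [Finset.mul_sum]
  rw [Finset.sum_comm]
  refine Finset.sum_congr rfl fun a _ => Finset.sum_congr rfl fun b _ => ?_
  rw [kappa_symm]; ring

lemma kf_sub_left (u w v : B → ℝ) : kf M (u - w) v = kf M u v - kf M w v := by
  simp [kf, sub_mul, Finset.sum_sub_distrib]

lemma kf_smul_left (r : ℝ) (u v : B → ℝ) : kf M (r • u) v = r * kf M u v := by
  simp only [kf, Pi.smul_apply, smul_eq_mul, Finset.mul_sum]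
  exact Finset.sum_congr rfl fun x _ => by ring

lemma kf_sub_right (u v w : B → ℝ) : kf M u (v - w) = kf M u v - kf M u w := by
  simp [kf, KK_sub, mul_sub, Finset.sum_sub_distrib]

lemma kf_smul_right (r : ℝ) (u v : B → ℝ) : kf M u (r • v) = r * kf M u v := by
  simp only [kf, KK_smul]
  rw [Finset.mul_sum]
  exact Finset.sum_congr rfl fun x _ => by ring

/-- The simple reflections of the geometric representation. -/
def sig (a : B) : Module.End ℝ (B → ℝ) where
  toFun v := v - (2 * KK M a v) • al a
  map_add' u v := by
    ext d
    simp [KK_add]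
    ring
  map_smul' r v := by
    ext d
    simp [KK_smul]
    ring

lemma sig_apply (a : B) (v : B → ℝ) : sig M a v = v - (2 * KK M a v) • al a := rfl

lemma sig_apply_ne (a : B) (v : B → ℝ) {d : B} (h : d ≠ a) : sig M a v d = v d := by
  simp [sig_apply, al_ne h]

lemma sig_fix (a : B) (v : B → ℝ) (h : KK M a v = 0) : sig M a v = v := by
  simp [sig_apply, h]

lemma kf_sig (c : B) (u v : B → ℝ) : kf M (sig M c u) (sig M c v) = kf M u v := by
  have h1 : kf M (al c) (al c) = 1 := by rw [kf_al_left, KK_al, kappa_self]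
  have h2 : kf M u (al c) = KK M c u := by rw [kf_symm, kf_al_left]
  simp only [sig_apply, kf_sub_left, kf_sub_right, kf_smul_left, kf_smul_right, kf_al_left,
    h1, h2]
  ring

lemma sig_mul_self (a : B) : sig M a * sig M a = 1 := by
  apply LinearMap.ext
  intro v
  rw [Module.End.mul_apply, Module.End.one_apply, sig_apply, sig_apply, KK_sub, KK_smul, KK_al,
    kappa_self]
  ext d
  simp
  ring

/-- Trig helper: `sin (X + θ) = 2 cos θ sin X - sin (X - θ)`. -/
lemma sin_step (X θ : ℝ) : Real.sin (X + θ) = 2 * Real.cos θ * Real.sin X - Real.sin (X - θ) := by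
  rw [Real.sin_add, Real.sin_sub]; ring

lemma sig_combo_snd (i j : B) (hij : i ≠ j) (c P Q : ℝ) (hk : kappa M j i = -c) :
    sig M j (P • al i + Q • al j) = P • al i + (2 * c * P - Q) • al j := by
  have hK : KK M j (P • al i + Q • al j) = -(c * P) + Q := by
    rw [KK_add, KK_smul, KK_smul, KK_al, KK_al, hk, kappa_self]; ring
  rw [sig_apply, hK]
  ext d
  by_cases hdj : d = j
  · subst hdj
    simp [al_ne hij.symm]
    ring
  · simp [al_ne (fun h => hdj h : d ≠ j)]

lemma sig_combo_fst (i j : B) (hij : i ≠ j) (c P Q : ℝ) (hk : kappa M i j = -c) :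
    sig M i (P • al i + Q • al j) = (2 * c * Q - P) • al i + Q • al j := by
  have hK : KK M i (P • al i + Q • al j) = P - c * Q := by
    rw [KK_add, KK_smul, KK_smul, KK_al, KK_al, hk, kappa_self]; ring
  rw [sig_apply, hK]
  ext d
  by_cases hdi : d = i
  · subst hdi
    simp [al_ne hij]
    ring
  · simp [al_ne (fun h => hdi h : d ≠ i)]

lemma cheb_aux (i j : B) (hij : i ≠ j) (θ : ℝ)
    (hki : kappa M i j = -Real.cos θ) (hkj : kappa M j i = -Real.cos θ) (n : ℕ) :
    ((sig M i * sig M j) ^ n) (Real.sin θ • al i) =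
      Real.sin ((2 * n + 1) * θ) • al i + Real.sin ((2 * n) * θ) • al j := by
  induction n with
  | zero =>
    norm_num
  | succ n ih =>
    set c := Real.cos θ with hc
    rw [pow_succ', Module.End.mul_apply, ih, Module.End.mul_apply,
      sig_combo_snd M i j hij c _ _ hkj, sig_combo_fst M i j hij c _ _ hki]
    have t1 : Real.sin ((2 * (n : ℝ) + 2) * θ)
        = 2 * c * Real.sin ((2 * n + 1) * θ) - Real.sin ((2 * (n : ℝ)) * θ) := by
      rw [show (2 * (n : ℝ) + 2) * θ = ((2 * n + 1) * θ) + θ by ring,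
        show (2 * (n : ℝ)) * θ = ((2 * n + 1) * θ) - θ by ring]
      exact sin_step _ _
    have t2 : Real.sin ((2 * (n : ℝ) + 3) * θ)
        = 2 * c * Real.sin ((2 * (n : ℝ) + 2) * θ) - Real.sin ((2 * n + 1) * θ) := by
      rw [show (2 * (n : ℝ) + 3) * θ = ((2 * (n : ℝ) + 2) * θ) + θ by ring,
        show (2 * (n : ℝ) + 1) * θ = ((2 * (n : ℝ) + 2) * θ) - θ by ring]
      exact sin_step _ _
    have e1 : (2 * ((n : ℝ) + 1) + 1) * θ = (2 * (n : ℝ) + 3) * θ := by ring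
    have e2 : (2 * ((n : ℝ) + 1)) * θ = (2 * (n : ℝ) + 2) * θ := by ring
    push_cast
    rw [e1, e2, t2, t1]

lemma conj_pow_of_invol (f g : Module.End ℝ (B → ℝ)) (hf : f * f = 1) (n : ℕ) :
    (f * g * f) ^ n = f * g ^ n * f := by
  induction n with
  | zero => rw [pow_zero, pow_zero, mul_one, hf]
  | succ n ih =>
    rw [pow_succ, ih, pow_succ]
    calc f * g ^ n * f * (f * g * f) = f * g ^ n * (f * f) * g * f := by
          simp only [mul_assoc]
      _ = f * (g ^ n * g) * f := by rw [hf]; simp only [mul_assoc, mul_one]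

lemma sig_neg_al (a : B) : sig M a (al a) = -(al a) := by
  rw [sig_apply]
  ext d
  simp
  ring

/-- The key braid relation: the Chebyshev computation shows `(σᵢσⱼ)^m` fixes `αᵢ`. -/
lemma pow_fix_fst (i j : B) (hij : i ≠ j) (m : ℕ) (hm : 2 ≤ m)
    (hMij : (M i j : ℕ) = m) (hMji : (M j i : ℕ) = m) :
    ((sig M i * sig M j) ^ m) (al i) = al i := by
  have hmR : (0 : ℝ) < m := by exact_mod_cast (by omega : 0 < m)
  have hm0 : (m : ℝ) ≠ 0 := ne_of_gt hmR
  set θ : ℝ := π / m with hθ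
  have hθpos : 0 < θ := div_pos pi_pos hmR
  have hθlt : θ < π := by
    rw [hθ, div_lt_iff₀ hmR]
    nlinarith [pi_pos, show (2:ℝ) ≤ (m:ℝ) by exact_mod_cast hm]
  have hsin : Real.sin θ ≠ 0 := ne_of_gt (Real.sin_pos_of_pos_of_lt_pi hθpos hθlt)
  have hki : kappa M i j = -Real.cos θ := by rw [kappa, hMij]
  have hkj : kappa M j i = -Real.cos θ := by rw [kappa, hMji]
  have h := cheb_aux M i j hij θ hki hkj m
  have hs1 : (2 * (m : ℝ) + 1) * θ = θ + 2 * π := by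
    field_simp [hθ]
    have : (m : ℝ) * θ = π := by rw [hθ]; field_simp
    linarith
  have hs2 : (2 * (m : ℝ)) * θ = 2 * π := by
    field_simp [hθ]
    rw [hθ]; field_simp
  rw [hs1, hs2, Real.sin_add_two_pi, Real.sin_two_pi, zero_smul, add_zero, map_smul] at h
  exact smul_right_injective (B → ℝ) hsin h

lemma pow_fix_snd (i j : B) (hij : i ≠ j) (m : ℕ) (hm : 2 ≤ m)
    (hMij : (M i j : ℕ) = m) (hMji : (M j i : ℕ) = m) :
    ((sig M i * sig M j) ^ m) (al j) = al j := by
  have h1 : sig M j * (sig M j * sig M i) * sig M j = sig M i * sig M j := by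
    calc sig M j * (sig M j * sig M i) * sig M j
        = (sig M j * sig M j) * (sig M i * sig M j) := by simp only [mul_assoc]
      _ = sig M i * sig M j := by rw [sig_mul_self]; exact one_mul _
  have key : (sig M i * sig M j) ^ m = sig M j * (sig M j * sig M i) ^ m * sig M j := by
    rw [← h1, conj_pow_of_invol _ _ (sig_mul_self M j)]
  rw [key, Module.End.mul_apply, Module.End.mul_apply, sig_neg_al, map_neg,
    pow_fix_fst M j i hij.symm m hm hMji hMij, map_neg, sig_neg_al, neg_neg]

/-- The braid relations hold in the geometric representation. -/
lemma braid : CoxeterMatrix.IsLiftable M (fun a => sig M a) := by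
  intro i j
  by_cases hij : i = j
  · subst hij
    rw [M.diagonal, pow_one]
    exact sig_mul_self M i
  set m : ℕ := M i j with hm
  rcases Nat.lt_or_ge m 2 with h2 | h2
  · interval_cases m
    · exact pow_zero _
    · exact absurd hm.symm (M.off_diagonal i j hij)
  -- main case : m ≥ 2
  have hMji : (M j i : ℕ) = m := by rw [M.symmetric j i, hm]
  have hmR : (0 : ℝ) < m := by exact_mod_cast (by omega : 0 < m)
  have hc : Real.cos (π / m) < 1 := by
    have : 0 < π / m := div_pos pi_pos hmR
    calc Real.cos (π / m) < Real.cos 0 := by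
          apply Real.cos_lt_cos_of_nonneg_of_le_pi le_rfl ?_ this
          calc (π / m : ℝ) ≤ π / 2 := by
                gcongr
                exact_mod_cast h2
            _ ≤ π := by linarith [pi_pos]
      _ = 1 := Real.cos_zero
  have hcge : 0 ≤ Real.cos (π / m) := by
    apply Real.cos_nonneg_of_mem_Icc
    constructor
    · have : 0 < π / (m : ℝ) := div_pos pi_pos hmR
      linarith [pi_pos]
    · gcongr
      exact_mod_cast h2
  set c : ℝ := Real.cos (π / m) with hcdef
  have hd : 1 - c ^ 2 ≠ 0 := by nlinarith
  apply LinearMap.ext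
  intro v
  rw [Module.End.one_apply]
  -- decompose v
  set x : ℝ := (KK M i v + c * KK M j v) / (1 - c ^ 2) with hx
  set y : ℝ := (KK M j v + c * KK M i v) / (1 - c ^ 2) with hy
  set u : (B → ℝ) := v - x • al i - y • al j with hu
  have hki : kappa M i j = -c := by rw [kappa]
  have hkj : kappa M j i = -c := by rw [kappa, hMji]
  have hKi : KK M i u = 0 := by
    rw [hu, KK_sub, KK_sub, KK_smul, KK_smul, KK_al, KK_al, kappa_self, hki, hx, hy]
    field_simp
    ring
  have hKj : KK M j u = 0 := by
    rw [hu, KK_sub, KK_sub, KK_smul, KK_smul, KK_al, KK_al, kappa_self, hkj, hx, hy]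
    field_simp
    ring
  have hfixu : ∀ n : ℕ, ((sig M i * sig M j) ^ n) u = u := by
    intro n
    induction n with
    | zero => rw [pow_zero, Module.End.one_apply]
    | succ n ih =>
      rw [pow_succ', Module.End.mul_apply, ih, Module.End.mul_apply, sig_fix M j u hKj,
        sig_fix M i u hKi]
  have hv : v = u + x • al i + y • al j := by rw [hu]; abel
  rw [hv, map_add, map_add, map_smul, map_smul, hfixu,
    pow_fix_fst M i j hij m h2 rfl hMji, pow_fix_snd M i j hij m h2 rfl hMji]

section Rep

variable {W : Type*} [Group W] (cs : CoxeterSystem M W)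

/-- The geometric representation. -/
def rho : W →* Module.End ℝ (B → ℝ) := cs.lift ⟨fun a => sig M a, braid M⟩

@[simp] lemma rho_simple (a : B) : rho M cs (cs.simple a) = sig M a :=
  cs.lift_apply_simple (braid M) a

lemma rho_kf (z : W) : ∀ u v : B → ℝ,
    kf M (rho M cs z u) (rho M cs z v) = kf M u v := by
  induction z using cs.simple_induction with
  | simple a => intro u v; rw [rho_simple]; exact kf_sig M a u v
  | one => intro u v; simp
  | mul z₁ z₂ h₁ h₂ =>
    intro u v
    rw [map_mul, Module.End.mul_apply, Module.End.mul_apply, h₁, h₂]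

lemma rho_inv_cancel (z : W) (u : B → ℝ) : rho M cs z⁻¹ (rho M cs z u) = u := by
  rw [← Module.End.mul_apply, ← map_mul, inv_mul_cancel, map_one, Module.End.one_apply]

/-- Key rigidity: if `z⁻¹ s_b z` is a simple reflection `s_e`, then the vector
`ρ(z⁻¹) α_b` is a multiple of `α_e`. -/
lemma reflect_vec (z : W) (b e : B) (h : z⁻¹ * cs.simple b * z = cs.simple e) :
    ∃ r : ℝ, rho M cs z⁻¹ (al b) = r • al e := by
  set v : B → ℝ := rho M cs z⁻¹ (al b) with hv
  have hmap : ∀ u : B → ℝ, rho M cs z⁻¹ (sig M b (rho M cs z u)) = sig M e u := by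
    intro u
    have := congrArg (rho M cs) h
    rw [map_mul, map_mul, rho_simple, rho_simple] at this
    calc rho M cs z⁻¹ (sig M b (rho M cs z u))
        = (rho M cs z⁻¹ * sig M b * rho M cs z) u := by
          simp only [Module.End.mul_apply]
      _ = sig M e u := by rw [this]
  have hgen : ∀ u : B → ℝ, rho M cs z⁻¹ (sig M b (rho M cs z u))
      = u - (2 * kf M v u) • v := by
    intro u
    rw [sig_apply, map_sub, map_smul, rho_inv_cancel]
    congr 2
    rw [← kf_al_left, ← rho_kf M cs z⁻¹ (al b) (rho M cs z u), rho_inv_cancel]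
  have hvv : kf M v v = 1 := by
    rw [hv, rho_kf, kf_al_left, KK_al, kappa_self]
  have h2 : v - (2 * kf M v v) • v = sig M e v := by rw [← hgen, hmap]
  rw [hvv, sig_apply] at h2
  refine ⟨KK M e v, funext fun d => ?_⟩
  have hd := congrFun h2 d
  simp only [Pi.sub_apply, Pi.smul_apply, smul_eq_mul] at hd ⊢
  linarith

/-- Coordinates away from `{a, c}` are preserved by products of `σ_a, σ_c`. -/
lemma pow_sig_coord (a c b : B) (hba : b ≠ a) (hbc : b ≠ c) (n : ℕ) (v : B → ℝ) :
    (((sig M a * sig M c) ^ n) v) b = v b := by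
  induction n with
  | zero => rw [pow_zero, Module.End.one_apply]
  | succ n ih =>
    rw [pow_succ', Module.End.mul_apply, Module.End.mul_apply, sig_apply_ne M a _ hba,
      sig_apply_ne M c _ hbc, ih]

end Rep

section Group

variable {W : Type*} [Group W] (cs : CoxeterSystem M W)

/-- The set of elements conjugating `t` into a simple reflection. -/
def Xset (t : W) : Set W := {x | ∃ k, x⁻¹ * t * x = cs.simple k}

lemma braid_shift (a c : B) (q : ℕ) :
    cs.simple a * (cs.simple c * cs.simple a) ^ q
      = (cs.simple a * cs.simple c) ^ q * cs.simple a := by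
  induction q with
  | zero => simp
  | succ q ih =>
    rw [pow_succ, ← mul_assoc, ih, pow_succ]
    group

lemma braid_conj (a c : B) (q : ℕ) (h : (cs.simple a * cs.simple c) ^ (2 * q + 1) = 1) :
    ((cs.simple c * cs.simple a) ^ q)⁻¹ * cs.simple a * (cs.simple c * cs.simple a) ^ q
      = cs.simple c := by
  have hinv : ((cs.simple c * cs.simple a) ^ q)⁻¹ = (cs.simple a * cs.simple c) ^ q := by
    rw [← inv_pow, mul_inv_rev, cs.inv_simple, cs.inv_simple]
  rw [hinv, mul_assoc, braid_shift, ← mul_assoc, ← pow_add]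
  have h2q : (cs.simple a * cs.simple c) ^ (q + q) = cs.simple c * cs.simple a := by
    have : (cs.simple a * cs.simple c) ^ (q + q) * (cs.simple a * cs.simple c) = 1 := by
      rw [← pow_succ]
      convert h using 2
      omega
    have h3 := congrArg (fun x => x * (cs.simple a * cs.simple c)⁻¹) this
    simp only [mul_assoc, mul_inv_cancel, mul_one, one_mul] at h3
    rw [h3, mul_inv_rev, cs.inv_simple, cs.inv_simple]
  rw [h2q, mul_assoc, cs.simple_mul_simple_self, mul_one]

/-- Conjugate simple reflections are connected by a path of odd edges. -/
lemma odd_path_of_conj (a b : B) (z : W) (h : z⁻¹ * cs.simple a * z = cs.simple b) :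
    Relation.ReflTransGen (fun x y => Odd (M x y)) a b := by
  classical
  have hsq : ∀ g : Multiplicative (ZMod 2), g * g = 1 := by decide
  have hlift : CoxeterMatrix.IsLiftable M (fun x =>
      Multiplicative.ofAdd
        (if Relation.ReflTransGen (fun x y : B => Odd (M x y)) a x then (1 : ZMod 2) else 0)) := by
    intro x y
    by_cases hodd : Odd (M x y)
    · have hiff : Relation.ReflTransGen (fun x y : B => Odd (M x y)) a x
          ↔ Relation.ReflTransGen (fun x y : B => Odd (M x y)) a y := by
        constructor
        · intro hx; exact hx.tail hodd
        · intro hy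
          refine hy.tail ?_
          have : M y x = M x y := M.symmetric y x
          rw [this]
          exact hodd
      simp only [hiff]
      rw [hsq]
      exact one_pow _
    · obtain ⟨q, hq⟩ := Nat.even_or_odd (M x y) |>.resolve_right hodd
      rw [hq, show q + q = 2 * q by ring, pow_mul, pow_two, hsq, one_pow]
  set φ := cs.lift ⟨_, hlift⟩ with hφ
  have hconj := congrArg φ h
  rw [map_mul, map_mul, map_inv] at hconj
  have hab : φ (cs.simple a) = φ (cs.simple b) := by
    rw [← hconj, mul_comm ((φ z)⁻¹) (φ (cs.simple a)), mul_assoc, inv_mul_cancel, mul_one]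
  rw [hφ, cs.lift_apply_simple hlift a, cs.lift_apply_simple hlift b] at hab
  by_cases hR : Relation.ReflTransGen (fun x y : B => Odd (M x y)) a b
  · exact hR
  · exfalso
    rw [if_pos Relation.ReflTransGen.refl, if_neg hR] at hab
    have : (1 : ZMod 2) = 0 := by
      have := congrArg Multiplicative.toAdd hab
      simpa using this
    simp at this

lemma m_eq_two_of_cos_zero {m : ℕ} (h : Real.cos (π / m) = 0) : m = 2 := by
  rcases m with _ | _ | _ | m
  · norm_num at h
  · norm_num [Real.cos_pi] at h
  · rfl
  · exfalso
    have h3 : (3 : ℝ) ≤ ((m + 3 : ℕ) : ℝ) := by push_cast; linarith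
    have hlt : π / ((m + 3 : ℕ) : ℝ) < π / 2 :=
      div_lt_div_of_pos_left pi_pos two_pos (by linarith)
    have hpos : 0 < π / ((m + 3 : ℕ) : ℝ) := div_pos pi_pos (by linarith)
    have := Real.cos_pos_of_mem_Ioo ⟨by linarith [pi_pos], hlt⟩
    rw [h] at this
    exact lt_irrefl 0 this

/-- The main induction: conjugate simple reflections with the same "wall vertex set"
are equal. -/
lemma main_ind (a b : B) (hpath : Relation.ReflTransGen (fun x y => Odd (M x y)) a b)
    (hX : Xset M cs (cs.simple a) = Xset M cs (cs.simple b)) :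
    cs.simple a = cs.simple b := by
  induction hpath using Relation.ReflTransGen.head_induction_on with
  | refl => rfl
  | @head a c hac hcb ih =>
    by_cases hsab : cs.simple a = cs.simple b
    · exact hsab
    have hab : a ≠ b := fun h => hsab (by rw [h])
    -- Step 1 : M a b = 2
    have hsa_mem : cs.simple a ∈ Xset M cs (cs.simple a) :=
      ⟨a, by rw [cs.inv_simple, cs.simple_mul_simple_self, one_mul]⟩
    rw [hX] at hsa_mem
    obtain ⟨e, he⟩ := hsa_mem
    obtain ⟨r, hr⟩ := reflect_vec M cs (cs.simple a) b e he
    rw [cs.inv_simple, rho_simple] at hr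
    have hsig : sig M a (al b) = al b - (2 * kappa M a b) • al a := by
      rw [sig_apply, KK_al]
    rw [hsig] at hr
    have hcoordb := congrFun hr b
    simp only [Pi.sub_apply, Pi.smul_apply, smul_eq_mul, al_same, al_ne hab.symm] at hcoordb
    -- hcoordb : 1 - 2 * kappa M a b * 0 = r * al e b
    have heb : e = b := by
      by_contra heb
      rw [al_ne (fun h => heb h.symm : b ≠ e)] at hcoordb
      norm_num at hcoordb
    rw [heb] at he hr
    have hcoorda := congrFun hr a
    simp only [Pi.sub_apply, Pi.smul_apply, smul_eq_mul, al_same, al_ne hab] at hcoorda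
    -- hcoorda : 0 - 2 * kappa M a b * 1 = r * 0
    have hkab : kappa M a b = 0 := by linarith [hcoorda]
    have hMab2 : (M a b : ℕ) = 2 := by
      apply m_eq_two_of_cos_zero (m := M a b)
      have : -Real.cos (π / (M a b : ℕ)) = 0 := hkab
      linarith [this]
    -- Step 2 : analyse the first edge a ~ c
    by_cases hmac1 : (M a c : ℕ) = 1
    · have hac_eq : a = c := by
        by_contra hne
        exact M.off_diagonal a c hne hmac1
      rw [hac_eq]
      apply ih
      rw [← hac_eq]
      exact hX
    · obtain ⟨q, hq⟩ := hac
      have hbc : b ≠ c := by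
        intro hbceq
        rw [← hbceq] at hq
        omega
      have hba : b ≠ a := hab.symm
      set u : W := (cs.simple c * cs.simple a) ^ q with hu
      have hbraid : (cs.simple a * cs.simple c) ^ (2 * q + 1) = 1 := by
        have := cs.simple_mul_simple_pow a c
        rwa [show (M a c : ℕ) = 2 * q + 1 by omega] at this
      have hu1 : u⁻¹ * cs.simple a * u = cs.simple c := braid_conj M cs a c q hbraid
      have huXa : u ∈ Xset M cs (cs.simple a) := ⟨c, hu1⟩
      rw [hX] at huXa
      obtain ⟨e, he⟩ := huXa
      obtain ⟨r, hr⟩ := reflect_vec M cs u b e he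
      have huinv : u⁻¹ = (cs.simple a * cs.simple c) ^ q := by
        rw [hu, ← inv_pow, mul_inv_rev, cs.inv_simple, cs.inv_simple]
      have hrho : rho M cs u⁻¹ = (sig M a * sig M c) ^ q := by
        rw [huinv, map_pow, map_mul, rho_simple, rho_simple]
      rw [hrho] at hr
      have hcoordb := congrFun hr b
      rw [pow_sig_coord M a c b hba hbc q (al b)] at hcoordb
      simp only [al_same, Pi.smul_apply, smul_eq_mul] at hcoordb
      have heb : e = b := by
        by_contra heb
        rw [al_ne (fun h => heb h.symm : b ≠ e)] at hcoordb
        norm_num at hcoordb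
      rw [heb] at he
      -- he : u⁻¹ * s b * u = s b
      have hXcb : Xset M cs (cs.simple c) = Xset M cs (cs.simple b) := by
        have hx1 : ∀ x : W, x ∈ Xset M cs (cs.simple c) ↔ u * x ∈ Xset M cs (cs.simple a) := by
          intro x
          constructor
          · rintro ⟨k, hk⟩
            refine ⟨k, ?_⟩
            calc (u * x)⁻¹ * cs.simple a * (u * x)
                = x⁻¹ * (u⁻¹ * cs.simple a * u) * x := by group
              _ = x⁻¹ * cs.simple c * x := by rw [hu1]
              _ = cs.simple k := hk
          · rintro ⟨k, hk⟩
            refine ⟨k, ?_⟩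
            calc x⁻¹ * cs.simple c * x
                = x⁻¹ * (u⁻¹ * cs.simple a * u) * x := by rw [hu1]
              _ = (u * x)⁻¹ * cs.simple a * (u * x) := by group
              _ = cs.simple k := hk
        have hx2 : ∀ x : W, x ∈ Xset M cs (cs.simple b) ↔ u * x ∈ Xset M cs (cs.simple b) := by
          intro x
          constructor
          · rintro ⟨k, hk⟩
            refine ⟨k, ?_⟩
            calc (u * x)⁻¹ * cs.simple b * (u * x)
                = x⁻¹ * (u⁻¹ * cs.simple b * u) * x := by group
              _ = x⁻¹ * cs.simple b * x := by rw [he]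
              _ = cs.simple k := hk
          · rintro ⟨k, hk⟩
            refine ⟨k, ?_⟩
            calc x⁻¹ * cs.simple b * x
                = x⁻¹ * (u⁻¹ * cs.simple b * u) * x := by rw [he]
              _ = (u * x)⁻¹ * cs.simple b * (u * x) := by group
              _ = cs.simple k := hk
        ext x
        rw [hx1 x, hX, hx2 x]
      have hscb := ih hXcb
      -- s a = u * s c * u⁻¹ = u * s b * u⁻¹ = s b
      have h1 : cs.simple a = u * cs.simple c * u⁻¹ := by
        conv_rhs => rw [← hu1]
        group
      have h2 : u * cs.simple b * u⁻¹ = cs.simple b := by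
        conv_lhs => rw [← he]
        group
      rw [h1, hscb, h2]

end Group

end

end CoxStmt5

/-- Let `M` be the wall of a reflection `γ` in a Coxeter system `(W, S)`,
with vertex set `VM = {x | ∃ i, γ x = x sᵢ}` and stabiliser
`WM = {g | g · VM = VM}`.  If `(w, w sᵢ)` and `(v, v sᵢ)` are edges of the wall with the
same generator, then `v w⁻¹ ∈ WM`; the `WM`-orbit of `w` is exactly
`{u | γ u = u sᵢ}`; and there are at most `|S|` orbits (an injection from orbits to `B`). -/
theorem stmt_5 {B W : Type*} [Group W] [Finite B] {M : CoxeterMatrix B}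
    (cs : CoxeterSystem M W) (γ : W) (hγ : cs.IsReflection γ)
    (VM : Set W) (hVM : VM = {x | ∃ i : B, γ * x = x * cs.simple i})
    (WM : Set W) (hWM : WM = {g | (fun y => g * y) '' VM = VM})
    (i : B) (w v : W) (hw : γ * w = w * cs.simple i) (hv : γ * v = v * cs.simple i) :
    v * w⁻¹ ∈ WM ∧
    {u | ∃ g ∈ WM, u = g * w} = {u | γ * u = u * cs.simple i} ∧
    ∃ f : {O : Set W // ∃ x ∈ VM, O = {u | ∃ g ∈ WM, u = g * x}} → B,
      Function.Injective f := by
  classical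
  letI : Fintype B := Fintype.ofFinite B
  -- Any element commuting with γ stabilises VM.
  have comm_mem : ∀ t : W, t * γ = γ * t → (fun y => t * y) '' VM = VM := by
    intro t ht
    have ht' : t⁻¹ * γ = γ * t⁻¹ := by
      have h1 : t⁻¹ * (t * γ) * t⁻¹ = t⁻¹ * (γ * t) * t⁻¹ := by rw [ht]
      have h2 : t⁻¹ * (t * γ) * t⁻¹ = γ * t⁻¹ := by group
      have h3 : t⁻¹ * (γ * t) * t⁻¹ = t⁻¹ * γ := by group
      rw [← h3, ← h1]
      exact h2
    apply Set.Subset.antisymm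
    · rintro _ ⟨x, hx, rfl⟩
      rw [hVM] at hx ⊢
      obtain ⟨k, hk⟩ := hx
      refine ⟨k, ?_⟩
      calc γ * (t * x) = t * (γ * x) := by rw [← mul_assoc, ← ht, mul_assoc]
        _ = t * x * cs.simple k := by rw [hk, mul_assoc]
    · intro x hx
      refine ⟨t⁻¹ * x, ?_, by group⟩
      rw [hVM] at hx ⊢
      obtain ⟨k, hk⟩ := hx
      refine ⟨k, ?_⟩
      calc γ * (t⁻¹ * x) = t⁻¹ * (γ * x) := by rw [← mul_assoc, ← ht', mul_assoc]
        _ = t⁻¹ * x * cs.simple k := by rw [hk, mul_assoc]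
  -- Two vertices with the same colour give a commuting quotient.
  have comm_pair : ∀ (k : B) (x y : W), γ * x = x * cs.simple k → γ * y = y * cs.simple k →
      (y * x⁻¹) * γ = γ * (y * x⁻¹) := by
    intro k x y hx hy
    have hx' : x⁻¹ * γ = cs.simple k * x⁻¹ := by
      calc x⁻¹ * γ = x⁻¹ * (γ * x) * x⁻¹ := by group
        _ = x⁻¹ * (x * cs.simple k) * x⁻¹ := by rw [hx]
        _ = cs.simple k * x⁻¹ := by group
    calc y * x⁻¹ * γ = y * (x⁻¹ * γ) := by rw [mul_assoc]
      _ = y * cs.simple k * x⁻¹ := by rw [hx', mul_assoc]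
      _ = γ * y * x⁻¹ := by rw [← hy]
      _ = γ * (y * x⁻¹) := by rw [mul_assoc]
  have WM_mul : ∀ g h : W, g ∈ WM → h ∈ WM → g * h ∈ WM := by
    intro g h hg hh
    rw [hWM] at hg hh ⊢
    have hcomp : (fun y => g * h * y) = (fun y => g * y) ∘ (fun y => h * y) := by
      funext y; simp [mul_assoc]
    rw [Set.mem_setOf_eq, hcomp, Set.image_comp]
    rw [Set.mem_setOf_eq] at hg hh
    rw [hh, hg]
  have pair_mem : ∀ (k : B) (x y : W), γ * x = x * cs.simple k → γ * y = y * cs.simple k →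
      y * x⁻¹ ∈ WM := by
    intro k x y hx hy
    rw [hWM]
    exact comm_mem _ (comm_pair k x y hx hy)
  have orbit_eq : ∀ (k : B) (x y : W), γ * x = x * cs.simple k → γ * y = y * cs.simple k →
      {u | ∃ g ∈ WM, u = g * x} = {u | ∃ g ∈ WM, u = g * y} := by
    intro k x y hx hy
    ext u
    simp only [Set.mem_setOf_eq]
    constructor
    · rintro ⟨g, hg, rfl⟩
      exact ⟨g * (x * y⁻¹), WM_mul _ _ hg (pair_mem k y x hy hx), by group⟩
    · rintro ⟨g, hg, rfl⟩
      exact ⟨g * (y * x⁻¹), WM_mul _ _ hg (pair_mem k x y hx hy), by group⟩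
  refine ⟨pair_mem i w v hw hv, ?_, ?_⟩
  · -- the orbit of w is the colour class of i
    ext u
    simp only [Set.mem_setOf_eq]
    constructor
    · rintro ⟨g, hg, rfl⟩
      rw [hWM, Set.mem_setOf_eq] at hg
      have hmem : ∀ x : W, x ∈ VM ↔ g * x ∈ VM := by
        intro x
        constructor
        · intro hx
          rw [← hg]
          exact ⟨x, hx, rfl⟩
        · intro hx
          rw [← hg] at hx
          obtain ⟨x', hx', hxx⟩ := hx
          rwa [← mul_left_cancel hxx]
      have hwVM : w ∈ VM := by rw [hVM]; exact ⟨i, hw⟩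
      have huVM : g * w ∈ VM := (hmem w).mp hwVM
      rw [hVM, Set.mem_setOf_eq] at huVM
      obtain ⟨j, hj⟩ := huVM
      -- convert γ-relations to conjugation relations
      have hconv : ∀ (y : W) (k : B), γ * y = y * cs.simple k ↔ y⁻¹ * γ * y = cs.simple k := by
        intro y k
        constructor
        · intro h
          rw [mul_assoc, h, ← mul_assoc, inv_mul_cancel, one_mul]
        · intro h
          calc γ * y = y * (y⁻¹ * γ * y) := by group
            _ = y * cs.simple k := by rw [h]
      have hsi : cs.simple i = w⁻¹ * γ * w := ((hconv w i).mp hw).symm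
      have hsj : cs.simple j = (g * w)⁻¹ * γ * (g * w) := ((hconv (g * w) j).mp hj).symm
      have hXeq : CoxStmt5.Xset M cs (cs.simple i) = CoxStmt5.Xset M cs (cs.simple j) := by
        have hchain1 : ∀ x : W, (∃ k, x⁻¹ * cs.simple i * x = cs.simple k) ↔ w * x ∈ VM := by
          intro x
          constructor
          · rintro ⟨k, hk⟩
            rw [hVM, Set.mem_setOf_eq]
            refine ⟨k, (hconv _ k).mpr ?_⟩
            calc (w * x)⁻¹ * γ * (w * x) = x⁻¹ * (w⁻¹ * γ * w) * x := by group
              _ = x⁻¹ * cs.simple i * x := by rw [← hsi]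
              _ = cs.simple k := hk
          · intro hx
            rw [hVM, Set.mem_setOf_eq] at hx
            obtain ⟨k, hk⟩ := hx
            refine ⟨k, ?_⟩
            calc x⁻¹ * cs.simple i * x = x⁻¹ * (w⁻¹ * γ * w) * x := by rw [← hsi]
              _ = (w * x)⁻¹ * γ * (w * x) := by group
              _ = cs.simple k := (hconv _ k).mp hk
        have hchain2 : ∀ x : W, (∃ k, x⁻¹ * cs.simple j * x = cs.simple k) ↔ (g * w) * x ∈ VM := by
          intro x
          constructor
          · rintro ⟨k, hk⟩
            rw [hVM, Set.mem_setOf_eq]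
            refine ⟨k, (hconv _ k).mpr ?_⟩
            calc ((g * w) * x)⁻¹ * γ * ((g * w) * x)
                = x⁻¹ * ((g * w)⁻¹ * γ * (g * w)) * x := by group
              _ = x⁻¹ * cs.simple j * x := by rw [← hsj]
              _ = cs.simple k := hk
          · intro hx
            rw [hVM, Set.mem_setOf_eq] at hx
            obtain ⟨k, hk⟩ := hx
            refine ⟨k, ?_⟩
            calc x⁻¹ * cs.simple j * x = x⁻¹ * ((g * w)⁻¹ * γ * (g * w)) * x := by rw [← hsj]
              _ = ((g * w) * x)⁻¹ * γ * ((g * w) * x) := by group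
              _ = cs.simple k := (hconv _ k).mp hk
        ext x
        simp only [CoxStmt5.Xset, Set.mem_setOf_eq]
        rw [hchain1 x, hchain2 x, mul_assoc]
        exact hmem (w * x)
      have hconj : (w⁻¹ * (g * w))⁻¹ * cs.simple i * (w⁻¹ * (g * w)) = cs.simple j := by
        rw [hsi, hsj]
        group
      have hpath := CoxStmt5.odd_path_of_conj M cs i j _ hconj
      have hij := CoxStmt5.main_ind M cs i j hpath hXeq
      rw [hj, ← hij]
    · intro hu
      exact ⟨u * w⁻¹, pair_mem i w u hw hu, by group⟩
  · -- injection from orbits to B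
    have hOchoice : ∀ O : {O : Set W // ∃ x ∈ VM, O = {u | ∃ g ∈ WM, u = g * x}},
        ∃ p : W × B, O.1 = {u | ∃ g ∈ WM, u = g * p.1} ∧ γ * p.1 = p.1 * cs.simple p.2 := by
      rintro ⟨O, x, hxVM, hO⟩
      rw [hVM, Set.mem_setOf_eq] at hxVM
      obtain ⟨k, hk⟩ := hxVM
      exact ⟨(x, k), hO, hk⟩
    choose p hp1 hp2 using hOchoice
    refine ⟨fun O => (p O).2, ?_⟩
    intro O₁ O₂ hf
    apply Subtype.ext
    rw [hp1 O₁, hp1 O₂]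
    have hf' : (p O₁).2 = (p O₂).2 := hf
    apply orbit_eq (p O₁).2 _ _ (hp2 O₁)
    rw [hf']
    exact hp2 O₂
end

section
/- Let (W, S) be an infinite irreducible Coxeter system with S finite. Then every reflection (conjugate of a generator) has an infinite conjugacy class in W. -/
set_option linter.unusedSectionVars false
set_option maxHeartbeats 1600000

namespace Stmt6




open Real List CoxeterSystem

/-- Chebyshev-like sequence: `chebF γ k = sin (k θ) / sin θ` when `γ = cos θ`. -/
def chebF (γ : ℝ) : ℕ → ℝ
  | 0 => 0
  | 1 => 1
  | (k+2) => 2*γ*chebF γ (k+1) - chebF γ k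

@[simp] lemma chebF_zero (γ : ℝ) : chebF γ 0 = 0 := rfl
@[simp] lemma chebF_one (γ : ℝ) : chebF γ 1 = 1 := rfl
lemma chebF_add_two (γ : ℝ) (k : ℕ) :
    chebF γ (k+2) = 2*γ*chebF γ (k+1) - chebF γ k := rfl

def chebG (γ : ℝ) : ℕ → ℝ
  | 0 => 1
  | (k+1) => -chebF γ k

@[simp] lemma chebG_zero (γ : ℝ) : chebG γ 0 = 1 := rfl
@[simp] lemma chebG_succ (γ : ℝ) (k : ℕ) : chebG γ (k+1) = -chebF γ k := rfl

lemma chebG_identity (γ : ℝ) (k : ℕ) : chebG γ k + 2*γ*chebF γ k = chebF γ (k+1) := by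
  cases k with
  | zero => simp
  | succ n => rw [chebG_succ, chebF_add_two]; ring

lemma sin_mul_chebF (θ : ℝ) (k : ℕ) :
    Real.sin θ * chebF (Real.cos θ) k = Real.sin (k * θ) := by
  induction k using Nat.twoStepInduction with
  | zero => simp
  | one => simp
  | more n ih1 ih2 =>
    have e2 : ((n + 2 : ℕ) : ℝ) * θ = ((n + 1 : ℕ) : ℝ) * θ + θ := by push_cast; ring
    have e0 : ((n : ℕ) : ℝ) * θ = ((n + 1 : ℕ) : ℝ) * θ - θ := by push_cast; ring
    have trig : Real.sin (((n + 2 : ℕ) : ℝ) * θ)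
        = 2 * Real.cos θ * Real.sin (((n + 1 : ℕ) : ℝ) * θ) - Real.sin (((n : ℕ) : ℝ) * θ) := by
      rw [e2, e0, Real.sin_add, Real.sin_sub]; ring
    rw [chebF_add_two, trig]
    linear_combination 2 * Real.cos θ * ih2 - ih1

lemma chebF_cos_one (k : ℕ) : chebF 1 k = (k : ℝ) := by
  induction k using Nat.twoStepInduction with
  | zero => simp
  | one => simp
  | more n ih1 ih2 =>
    rw [chebF_add_two, ih1, ih2]; push_cast; ring

lemma theta_pos {m : ℕ} (hm : 2 ≤ m) : 0 < π / m :=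
  div_pos Real.pi_pos (by exact_mod_cast Nat.lt_of_lt_of_le Nat.zero_lt_two hm)

lemma theta_lt_pi {m : ℕ} (hm : 2 ≤ m) : π / m < π := by
  have h1 : (1 : ℝ) < (m : ℝ) := by exact_mod_cast Nat.lt_of_lt_of_le Nat.one_lt_two hm
  calc π / (m : ℝ) < π / 1 := by
        apply div_lt_div_of_pos_left Real.pi_pos one_pos h1
    _ = π := by norm_num

lemma sin_theta_pos {m : ℕ} (hm : 2 ≤ m) : 0 < Real.sin (π / m) :=
  Real.sin_pos_of_pos_of_lt_pi (theta_pos hm) (theta_lt_pi hm)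

lemma mR_ne {m : ℕ} (hm : 2 ≤ m) : (m : ℝ) ≠ 0 := by
  have : (0:ℝ) < m := by exact_mod_cast Nat.lt_of_lt_of_le Nat.zero_lt_two hm
  linarith

lemma m_theta {m : ℕ} (hm : 2 ≤ m) : (m : ℝ) * (π / m) = π := by
  rw [mul_div_assoc']
  exact mul_div_cancel_left₀ π (mR_ne hm)

lemma chebF_nonneg {m : ℕ} (hm : 2 ≤ m) {k : ℕ} (hk : k ≤ m) :
    0 ≤ chebF (Real.cos (π / m)) k := by
  have h := sin_mul_chebF (π / m) k
  have hsin : 0 ≤ Real.sin ((k : ℝ) * (π / m)) := by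
    apply Real.sin_nonneg_of_nonneg_of_le_pi
    · positivity
    · calc (k : ℝ) * (π / m) ≤ (m : ℝ) * (π / m) := by
            apply mul_le_mul_of_nonneg_right _ (le_of_lt (theta_pos hm))
            exact_mod_cast hk
        _ = π := m_theta hm
  rw [← h] at hsin
  exact nonneg_of_mul_nonneg_right hsin (sin_theta_pos hm)

lemma chebF_2m {m : ℕ} (hm : 2 ≤ m) : chebF (Real.cos (π / m)) (2*m) = 0 := by
  have h := sin_mul_chebF (π / m) (2*m)
  have e : ((2*m : ℕ) : ℝ) * (π / m) = 2 * π := by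
    push_cast
    calc (2 * (m:ℝ)) * (π / m) = 2 * ((m:ℝ) * (π / m)) := by ring
      _ = 2 * π := by rw [m_theta hm]
  rw [e, Real.sin_two_pi] at h
  exact (mul_eq_zero.mp h).resolve_left (ne_of_gt (sin_theta_pos hm))

lemma chebF_2m_add_one {m : ℕ} (hm : 2 ≤ m) : chebF (Real.cos (π / m)) (2*m+1) = 1 := by
  have h := sin_mul_chebF (π / m) (2*m+1)
  have e : ((2*m+1 : ℕ) : ℝ) * (π / m) = π / m + 2 * π := by
    push_cast
    calc (2 * (m:ℝ) + 1) * (π / m) = 2 * ((m:ℝ) * (π / m)) + π / m := by ring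
      _ = π / m + 2 * π := by rw [m_theta hm]; ring
  rw [e, Real.sin_add_two_pi] at h
  have h2 : Real.sin (π/m) * chebF (Real.cos (π / m)) (2*m+1) = Real.sin (π/m) * 1 := by
    rw [mul_one]; exact h
  exact mul_left_cancel₀ (ne_of_gt (sin_theta_pos hm)) h2

lemma chebF_2m_sub_one {m : ℕ} (hm : 2 ≤ m) : chebF (Real.cos (π / m)) (2*m-1) = -1 := by
  have h := sin_mul_chebF (π / m) (2*m-1)
  have h1 : (1:ℕ) ≤ 2*m := by omega
  have e : ((2*m-1 : ℕ) : ℝ) * (π / m) = 2 * π - π / m := by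
    push_cast [h1]
    calc (2 * (m:ℝ) - 1) * (π / m) = 2 * ((m:ℝ) * (π / m)) - π / m := by ring
      _ = 2 * π - π / m := by rw [m_theta hm]
  rw [e, Real.sin_two_pi_sub] at h
  have h2 : Real.sin (π/m) * chebF (Real.cos (π / m)) (2*m-1) = Real.sin (π/m) * (-1) := by
    rw [mul_neg_one]; exact h
  exact mul_left_cancel₀ (ne_of_gt (sin_theta_pos hm)) h2



noncomputable section

open Real List CoxeterSystem

variable {B : Type*} [DecidableEq B] [Fintype B] (M : CoxeterMatrix B)

/-- Entries of the standard bilinear form. -/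
def CC (a b : B) : ℝ := -Real.cos (π / (M a b : ℝ))

lemma CC_symm (a b : B) : CC M a b = CC M b a := by rw [CC, CC, M.symmetric]

lemma CC_diag (a : B) : CC M a a = 1 := by
  rw [CC, M.diagonal]
  norm_num [Real.cos_pi]

/-- standard basis vector -/
def ev (a : B) : B → ℝ := Pi.single a 1

lemma ev_self (a : B) : ev a a = (1 : ℝ) := by simp [ev]

/-- the linear functional `x ↦ B(e_a, x)` -/
def Kf (a : B) : (B → ℝ) →ₗ[ℝ] ℝ := ∑ b, CC M a b • LinearMap.proj b

lemma Kf_apply (a : B) (x : B → ℝ) : Kf M a x = ∑ b, CC M a b * x b := by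
  simp [Kf]

lemma Kf_ev (a b : B) : Kf M a (ev b) = CC M a b := by
  rw [Kf_apply]
  rw [Finset.sum_eq_single b]
  · simp [ev]
  · intro c _ hc
    simp [ev, Pi.single_apply, hc]
  · simp

/-- the full bilinear form -/
def KK (x y : B → ℝ) : ℝ := ∑ a, x a * Kf M a y

lemma KK_ev_left (a : B) (y : B → ℝ) : KK M (ev a) y = Kf M a y := by
  rw [KK, Finset.sum_eq_single a]
  · simp [ev]
  · intro c _ hc
    simp [ev, Pi.single_apply, hc]
  · simp

lemma KK_symm (x y : B → ℝ) : KK M x y = KK M y x := by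
  simp only [KK, Kf_apply, Finset.mul_sum]
  rw [Finset.sum_comm]
  apply Finset.sum_congr rfl
  intro a _
  apply Finset.sum_congr rfl
  intro b _
  rw [CC_symm]
  ring

lemma KK_ev_right (x : B → ℝ) (a : B) : KK M x (ev a) = Kf M a x := by
  rw [KK_symm, KK_ev_left]

/-- the reflection in `e_a` -/
def sig (a : B) : Module.End ℝ (B → ℝ) :=
  LinearMap.id - ((2 : ℝ) • Kf M a).smulRight (ev a)

lemma sig_apply (a : B) (x : B → ℝ) : sig M a x = x - (2 * Kf M a x) • ev a := by
  simp [sig, smul_smul]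

lemma Kf_sig (a : B) (x : B → ℝ) : Kf M a (sig M a x) = -Kf M a x := by
  rw [sig_apply, map_sub, map_smul, Kf_ev, CC_diag]
  simp; ring

lemma sig_sig (a : B) : sig M a * sig M a = 1 := by
  apply LinearMap.ext
  intro x
  rw [Module.End.mul_apply, sig_apply M a (sig M a x), Kf_sig, sig_apply]
  simp

lemma sig_ev (a b : B) : sig M a (ev b) = ev b - (2 * CC M a b) • ev a := by
  rw [sig_apply, Kf_ev]

lemma Kf_sig' (a b : B) (x : B → ℝ) :
    Kf M b (sig M a x) = Kf M b x - (2 * Kf M a x) * CC M b a := by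
  rw [sig_apply, map_sub, map_smul, Kf_ev]
  simp [smul_eq_mul]

/-- `sig` preserves the bilinear form. -/
lemma KK_sig (a : B) (x y : B → ℝ) : KK M (sig M a x) (sig M a y) = KK M x y := by
  have expand : ∀ z w : B → ℝ, KK M (sig M a z) w = KK M z w - (2 * Kf M a z) * Kf M a w := by
    intro z w
    rw [sig_apply]
    simp only [KK]
    rw [Finset.sum_congr rfl (fun b _ => by
      rw [Pi.sub_apply, Pi.smul_apply, smul_eq_mul, sub_mul])]
    rw [Finset.sum_sub_distrib]
    congr 1
    have : ∀ b ∈ Finset.univ, (2 * Kf M a z) * ev a b * Kf M b w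
        = (2 * Kf M a z) * (ev a b * Kf M b w) := by intro b _; ring
    rw [Finset.sum_congr rfl this, ← Finset.mul_sum]
    congr 1
    have := KK_ev_left M a w
    rw [KK] at this
    exact this
  rw [expand]
  have : KK M x (sig M a y) = KK M x y - (2 * Kf M a y) * Kf M a x := by
    rw [KK_symm, expand, KK_symm]
  rw [this]
  have h2 : Kf M a (sig M a y) = -Kf M a y := Kf_sig M a y
  rw [h2]
  ring


section DIH

variable {B : Type*} [DecidableEq B] [Fintype B] (M : CoxeterMatrix B)

def gam (a b : B) : ℝ := Real.cos (π / (M a b : ℝ))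

lemma CC_eq_neg_gam (a b : B) : CC M a b = -(gam M a b) := rfl

lemma gam_symm (a b : B) : gam M a b = gam M b a := by rw [gam, gam, M.symmetric]

/-- product of the reflections along a word -/
def LP (ω : List B) : Module.End ℝ (B → ℝ) := (ω.map (sig M)).prod

@[simp] lemma LP_nil : LP M [] = 1 := rfl

lemma LP_concat (ω : List B) (a : B) : LP M (ω.concat a) = LP M ω * sig M a := by
  simp [LP]

lemma LP_append (ω ω' : List B) : LP M (ω ++ ω') = LP M ω * LP M ω' := by
  simp [LP]

lemma sig_ev' (a b : B) : sig M a (ev b) = ev b + (2 * gam M a b) • ev a := by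
  rw [sig_ev, CC_eq_neg_gam]
  simp
  try abel

/-- The key dihedral computation : action of alternating words on the two basis vectors. -/
lemma dih (p : ℕ) : ∀ i j : B,
    (LP M (alternatingWord i j p) (ev i)
      = (if Even p then chebF (gam M i j) (p+1) else chebF (gam M i j) p) • ev i
        + (if Even p then chebF (gam M i j) p else chebF (gam M i j) (p+1)) • ev j)
  ∧ (LP M (alternatingWord i j p) (ev j)
      = (if Even p then -chebF (gam M i j) p else chebG (gam M i j) p) • ev i
        + (if Even p then chebG (gam M i j) p else -chebF (gam M i j) p) • ev j) := by
  induction p with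
  | zero =>
    intro i j
    constructor
    · simp [alternatingWord]
    · simp [alternatingWord]
  | succ p ih =>
    intro i j
    have hsw : alternatingWord i j (p+1) = (alternatingWord j i p).concat j :=
      alternatingWord_succ i j p
    obtain ⟨ih1, ih2⟩ := ih j i
    rw [gam_symm M j i] at ih1 ih2
    set γ := gam M i j with hγ
    have hGF : ∀ k, chebG γ k + 2*γ*chebF γ k = chebF γ (k+1) := chebG_identity γ
    have hFF : ∀ k, chebF γ (k+2) = 2*γ*chebF γ (k+1) - chebF γ k := chebF_add_two γ
    constructor
    · rw [hsw, LP_concat, Module.End.mul_apply, sig_ev']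
      rw [gam_symm M j i, ← hγ]
      rw [map_add, map_smul, ih2, ih1]
      rcases Nat.even_or_odd p with hp | hp
      · have hp1 : ¬ Even (p+1) := by simp [Nat.even_add_one, hp]
        simp only [if_pos hp, if_neg hp1]
        funext b
        simp only [Pi.add_apply, Pi.smul_apply, smul_eq_mul]
        have g1 := hGF p
        have g2 := hFF p
        linear_combination (ev i b) * g1 - (ev j b) * g2
      · have hp' : ¬ Even p := Nat.not_even_iff_odd.mpr hp
        have hp1 : Even (p+1) := Nat.even_add_one.mpr hp'
        simp only [if_neg hp', if_pos hp1]
        funext b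
        simp only [Pi.add_apply, Pi.smul_apply, smul_eq_mul]
        have g1 := hGF p
        have g2 := hFF p
        linear_combination (ev j b) * g1 - (ev i b) * g2
    · rw [hsw, LP_concat, Module.End.mul_apply]
      have : sig M j (ev j) = -(ev j) := by
        rw [sig_apply, Kf_ev, CC_diag]
        funext b
        simp [two_smul]
        try ring
      rw [this, map_neg, ih1]
      rcases Nat.even_or_odd p with hp | hp
      · have hp1 : ¬ Even (p+1) := by simp [Nat.even_add_one, hp]
        simp only [if_pos hp, if_neg hp1]
        funext b
        simp only [Pi.neg_apply, Pi.add_apply, Pi.smul_apply, smul_eq_mul, chebG_succ]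
        try ring
      · have hp' : ¬ Even p := Nat.not_even_iff_odd.mpr hp
        have hp1 : Even (p+1) := Nat.even_add_one.mpr hp'
        simp only [if_neg hp', if_pos hp1]
        funext b
        simp only [Pi.neg_apply, Pi.add_apply, Pi.smul_apply, smul_eq_mul, chebG_succ]
        try ring

end DIH

section REL

variable {B : Type*} [DecidableEq B] [Fintype B] (M : CoxeterMatrix B)

lemma alt_pow (a b : B) (k : ℕ) :
    LP M (alternatingWord a b (2*k)) = (sig M a * sig M b)^k := by
  induction k with
  | zero => simp [alternatingWord]
  | succ k ih =>
    have h1 : alternatingWord a b (2*(k+1)) = (alternatingWord b a (2*k+1)).concat b := by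
      have : 2*(k+1) = (2*k+1)+1 := by ring
      rw [this, alternatingWord_succ]
    have h2 : alternatingWord b a (2*k+1) = (alternatingWord a b (2*k)).concat a :=
      alternatingWord_succ b a (2*k)
    rw [h1, h2, LP_concat, LP_concat, ih, pow_succ, mul_assoc]

lemma CC_abs_lt_one {a b : B} (hm : 2 ≤ M a b) : -1 < CC M a b ∧ CC M a b ≤ 0 := by
  rw [CC_eq_neg_gam]
  have h1 : 0 ≤ gam M a b := by
    rw [gam]
    apply Real.cos_nonneg_of_mem_Icc
    constructor
    · have h1 := le_of_lt (theta_pos hm)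
      have h2 := Real.pi_pos
      linarith
    · rw [div_le_iff₀ (by exact_mod_cast Nat.lt_of_lt_of_le Nat.zero_lt_two hm)]
      have h2 : (2:ℝ) ≤ (M a b : ℝ) := by exact_mod_cast hm
      nlinarith [Real.pi_pos]
  have h2 : gam M a b < 1 := by
    rw [gam]
    rcases lt_or_eq_of_le (Real.cos_le_one (π / (M a b : ℝ))) with h | h
    · exact h
    · exfalso
      have hp := theta_pos hm
      have hlt := theta_lt_pi hm
      have := (Real.cos_eq_one_iff_of_lt_of_lt
        (by nlinarith [Real.pi_pos]) (by nlinarith [Real.pi_pos])).mp h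
      linarith
  constructor <;> [linarith; linarith]

lemma sig_fix (a : B) {r : B → ℝ} (h : Kf M a r = 0) : sig M a r = r := by
  rw [sig_apply, h]
  simp

/-- The Coxeter relation for the reflections `sig`. -/
lemma sig_relation {a b : B} (hab : a ≠ b) (hm : 2 ≤ M a b) :
    (sig M a * sig M b)^(M a b) = 1 := by
  set m := M a b with hmdef
  apply LinearMap.ext
  intro v
  set c := CC M a b with hc
  obtain ⟨hcl, hcu⟩ := CC_abs_lt_one M hm
  have hden : 1 - c^2 ≠ 0 := by nlinarith
  set ka := Kf M a v with hka
  set kb := Kf M b v with hkb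
  set p := (ka - c*kb)/(1-c^2) with hp
  set q := (kb - c*ka)/(1-c^2) with hq
  set r := v - p • ev a - q • ev b with hr
  have hva : Kf M a r = 0 := by
    rw [hr, map_sub, map_sub, map_smul, map_smul, Kf_ev, Kf_ev, CC_diag, ← hc, ← hka]
    simp only [smul_eq_mul]
    rw [hp, hq]
    field_simp
    ring
  have hvb : Kf M b r = 0 := by
    rw [hr, map_sub, map_sub, map_smul, map_smul, Kf_ev, Kf_ev, CC_diag]
    have : CC M b a = c := by rw [CC_symm]
    rw [this, ← hkb]
    simp only [smul_eq_mul]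
    rw [hp, hq]
    field_simp
    ring
  have hfixr : ∀ k : ℕ, ((sig M a * sig M b)^k) r = r := by
    intro k
    induction k with
    | zero => simp
    | succ k ih =>
      rw [pow_succ, Module.End.mul_apply, Module.End.mul_apply, sig_fix M b hvb,
        sig_fix M a hva, ih]
  have heva : ((sig M a * sig M b)^m) (ev a) = ev a := by
    rw [← alt_pow]
    have hdih := (dih M (2*m) a b).1
    rw [hdih, if_pos (even_two_mul m)]
    have h0 : chebF (gam M a b) (2*m) = 0 := chebF_2m hm
    have h1 : chebF (gam M a b) (2*m+1) = 1 := chebF_2m_add_one hm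
    rw [h0, h1]
    simp
  have hevb : ((sig M a * sig M b)^m) (ev b) = ev b := by
    rw [← alt_pow]
    have hdih := (dih M (2*m) a b).2
    rw [hdih, if_pos (even_two_mul m)]
    have h0 : chebF (gam M a b) (2*m) = 0 := chebF_2m hm
    have hG : chebG (gam M a b) (2*m) = 1 := by
      have h2m : 2*m = (2*m-1)+1 := by omega
      rw [h2m, chebG_succ]
      have hsub : chebF (gam M a b) (2*m-1) = -1 := chebF_2m_sub_one hm
      rw [hsub]
      norm_num
    rw [h0, hG]
    simp
  have hv : v = r + p • ev a + q • ev b := by rw [hr]; abel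
  rw [Module.End.one_apply, hv]
  rw [map_add, map_add, map_smul, map_smul, hfixr, heva, hevb]

variable {W : Type*} [Group W] (cs : CoxeterSystem M W)

lemma sig_liftable : M.IsLiftable (sig M) := by
  intro i i'
  by_cases h : i = i'
  · subst h
    rw [M.diagonal, pow_one, sig_sig]
  · rcases Nat.lt_or_ge (M i i') 2 with h2 | h2
    · interval_cases h3 : M.M i i'
      · rw [pow_zero]
      · exact absurd h3 (M.off_diagonal i i' h)
    · exact sig_relation M h h2

/-- The geometric representation. -/
def rho : W →* Module.End ℝ (B → ℝ) := cs.lift ⟨sig M, sig_liftable M⟩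

lemma rho_simple (i : B) : rho M cs (cs.simple i) = sig M i :=
  cs.lift_apply_simple (sig_liftable M) i

lemma rho_wordProd (ω : List B) : rho M cs (cs.wordProd ω) = LP M ω := by
  induction ω with
  | nil => simp [LP, cs.wordProd_nil]
  | cons a ω ih =>
    rw [cs.wordProd_cons, map_mul, rho_simple, ih]
    simp [LP]

lemma rho_inv_cancel (w : W) (x : B → ℝ) : rho M cs w⁻¹ (rho M cs w x) = x := by
  rw [← Module.End.mul_apply, ← map_mul, inv_mul_cancel, map_one, Module.End.one_apply]

lemma KK_rho (w : W) (x y : B → ℝ) : KK M (rho M cs w x) (rho M cs w y) = KK M x y := by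
  induction w using cs.simple_induction generalizing x y with
  | simple i => rw [rho_simple]; exact KK_sig M i x y
  | one => simp
  | mul w1 w2 h1 h2 =>
    rw [map_mul, Module.End.mul_apply, Module.End.mul_apply, h1, h2]

end REL

section POS

variable {B : Type*} [DecidableEq B] [Fintype B] (M : CoxeterMatrix B)
variable {W : Type*} [Group W] (cs : CoxeterSystem M W)

lemma alt_one (i j : B) : alternatingWord i j 1 = [j] := by
  rw [alternatingWord_succ]
  rfl

lemma sig_ev_self (a : B) : sig M a (ev a) = -(ev a) := by
  rw [sig_apply, Kf_ev, CC_diag]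
  funext b
  simp [two_smul]
  try ring

lemma gam_of_zero {i j : B} (h : M i j = 0) : gam M i j = 1 := by
  rw [gam, h]
  norm_num

lemma not_desc_length {w : W} {i : B} (h : ¬ cs.IsRightDescent w i) :
    cs.length (w * cs.simple i) = cs.length w + 1 := by
  rcases cs.length_mul_simple w i with h1 | h1
  · exact h1
  · exfalso
    exact h (by rw [CoxeterSystem.IsRightDescent]; omega)

lemma desc_length {w : W} {i : B} (h : cs.IsRightDescent w i) :
    cs.length (w * cs.simple i) + 1 = cs.length w := by
  rcases cs.length_mul_simple w i with h1 | h1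
  · exfalso
    rw [CoxeterSystem.IsRightDescent] at h
    omega
  · exact h1

/-- Stripping an alternating word off the right of `w`. -/
lemma strip : ∀ n : ℕ, ∀ w : W, cs.length w = n → ∀ i j : B, i ≠ j →
    cs.IsRightDescent w j →
    ∃ p v, 1 ≤ p ∧ w = v * cs.wordProd (alternatingWord i j p) ∧
      cs.length w = cs.length v + p ∧ ¬cs.IsRightDescent v i ∧ ¬cs.IsRightDescent v j := by
  intro n
  induction n using Nat.strong_induction_on with
  | _ n IH =>
    intro w hlen i j hij hdescj
    set w' := w * cs.simple j with hw'
    have hlw' : cs.length w' + 1 = cs.length w := desc_length M cs hdescj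
    have hndescj : ¬ cs.IsRightDescent w' j := by
      rw [CoxeterSystem.IsRightDescent, hw', cs.simple_mul_simple_cancel_right]
      rw [← hw']
      omega
    by_cases hdi : cs.IsRightDescent w' i
    · -- recurse with the pair (j, i)
      obtain ⟨p, v, hp1, hveq, hvlen, hnd1, hnd2⟩ :=
        IH (cs.length w') (by omega) w' rfl j i (Ne.symm hij) hdi
      refine ⟨p + 1, v, by omega, ?_, by omega, hnd2, hnd1⟩
      have : w = w' * cs.simple j := by
        rw [hw', cs.simple_mul_simple_cancel_right]
      rw [this, hveq, mul_assoc, ← cs.wordProd_concat, ← alternatingWord_succ]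
    · refine ⟨1, w', le_refl 1, ?_, by omega, hdi, hndescj⟩
      rw [alt_one, cs.wordProd_singleton, hw', cs.simple_mul_simple_cancel_right]

/-- Positivity: if `i` is not a right descent of `w`, then `w` maps the simple root `e_i`
to a nonnegative vector. -/
lemma pos : ∀ n : ℕ, ∀ w : W, cs.length w = n → ∀ i : B, ¬ cs.IsRightDescent w i →
    ∀ b : B, 0 ≤ rho M cs w (ev i) b := by
  intro n
  induction n using Nat.strong_induction_on with
  | _ n IH =>
    intro w hlen i hndesc b
    rcases Nat.eq_zero_or_pos n with h0 | hpos0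
    · have : w = 1 := by
        rw [← cs.length_eq_zero_iff, hlen, h0]
      rw [this, map_one, Module.End.one_apply]
      rw [ev, Pi.single_apply]
      split <;> norm_num
    · have hwne : w ≠ 1 := by
        intro h
        rw [h, cs.length_one] at hlen
        omega
      obtain ⟨j, hdescj⟩ := cs.exists_rightDescent_of_ne_one hwne
      have hij : i ≠ j := by
        intro h
        rw [h] at hndesc
        exact hndesc hdescj
      obtain ⟨p, v, hp1, hveq, hvlen, hndvi, hndvj⟩ :=
        strip M cs (cs.length w) w rfl i j hij hdescj
      -- length of w * s i
      have hlwsi : cs.length (w * cs.simple i) = cs.length w + 1 := not_desc_length M cs hndesc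
      -- w * s i = v * π (alternatingWord j i (p+1))
      have hws : w * cs.simple i = v * cs.wordProd (alternatingWord j i (p+1)) := by
        rw [hveq, mul_assoc, ← cs.wordProd_concat, ← alternatingWord_succ]
      -- the alternating word j i (p+1) is reduced, hence p + 1 ≤ M i j unless M i j = 0
      have hred : cs.length (cs.wordProd (alternatingWord j i (p+1))) = p + 1 := by
        have hub := cs.length_wordProd_le (alternatingWord j i (p+1))
        rw [CoxeterSystem.length_alternatingWord] at hub
        have hlb : cs.length w + 1 ≤ cs.length v
            + cs.length (cs.wordProd (alternatingWord j i (p+1))) := by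
          rw [← hlwsi, hws]
          exact cs.length_mul_le v _
        omega
      have hbound : M i j = 0 ∨ p + 1 ≤ M i j := by
        by_cases hM0 : M.M i j = 0
        · exact Or.inl hM0
        · right
          by_contra hgt
          have : ¬ cs.IsReduced (alternatingWord j i (p+1)) := by
            apply cs.not_isReduced_alternatingWord j i
            · rw [M.symmetric]; exact hM0
            · rw [M.symmetric]; omega
          apply this
          unfold CoxeterSystem.IsReduced
          rw [hred, CoxeterSystem.length_alternatingWord]
      -- coefficients are nonnegative
      have hm2 : M i j = 0 ∨ 2 ≤ M i j := by
        rcases hbound with h | h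
        · exact Or.inl h
        · right
          have := M.off_diagonal i j hij
          omega
      have hFp : 0 ≤ chebF (gam M i j) p ∧ 0 ≤ chebF (gam M i j) (p+1) := by
        rcases hm2 with h | h
        · rw [gam_of_zero M h, chebF_cos_one, chebF_cos_one]
          constructor <;> positivity
        · have hple : p + 1 ≤ M i j := by
            rcases hbound with h' | h'
            · omega
            · exact h'
          constructor
          · exact chebF_nonneg h (by omega)
          · exact chebF_nonneg h hple
      -- assemble
      have hrw : rho M cs w (ev i)
          = rho M cs v (LP M (alternatingWord i j p) (ev i)) := by
        rw [hveq, map_mul, Module.End.mul_apply, rho_wordProd]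
      have hvi := IH (cs.length v) (by omega) v rfl i hndvi
      have hvj := IH (cs.length v) (by omega) v rfl j hndvj
      rw [hrw, (dih M p i j).1]
      rcases Nat.even_or_odd p with hp | hp
      · rw [if_pos hp, if_pos hp]
        rw [map_add, map_smul, map_smul]
        simp only [Pi.add_apply, Pi.smul_apply, smul_eq_mul]
        have := hvi b
        have := hvj b
        nlinarith [hFp.1, hFp.2, hvi b, hvj b]
      · rw [if_neg (Nat.not_even_iff_odd.mpr hp), if_neg (Nat.not_even_iff_odd.mpr hp)]
        rw [map_add, map_smul, map_smul]
        simp only [Pi.add_apply, Pi.smul_apply, smul_eq_mul]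
        nlinarith [hFp.1, hFp.2, hvi b, hvj b]

/-- Faithfulness of the geometric representation. -/
lemma rho_faithful (w : W) (hw : rho M cs w = 1) : w = 1 := by
  by_contra hne
  obtain ⟨i, hi⟩ := cs.exists_rightDescent_of_ne_one hne
  have hnd : ¬ cs.IsRightDescent (w * cs.simple i) i := by
    rw [CoxeterSystem.IsRightDescent, cs.simple_mul_simple_cancel_right]
    rw [CoxeterSystem.IsRightDescent] at hi
    omega
  have hpos := pos M cs (cs.length (w * cs.simple i)) (w * cs.simple i) rfl i hnd i
  have hcomp : rho M cs w (ev i) = -(rho M cs (w * cs.simple i) (ev i)) := by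
    have : w = (w * cs.simple i) * cs.simple i := by
      rw [cs.simple_mul_simple_cancel_right]
    rw [this, map_mul, Module.End.mul_apply, rho_simple, sig_ev_self, map_neg]
    rw [cs.simple_mul_simple_cancel_right]
  rw [hw] at hcomp
  have h1 : (1 : Module.End ℝ (B → ℝ)) (ev i) = ev i := rfl
  rw [h1] at hcomp
  have h2 := congrFun hcomp i
  rw [ev_self] at h2
  simp only [Pi.neg_apply] at h2
  linarith
end POS

section KKlem

variable {B : Type*} [DecidableEq B] [Fintype B] (M : CoxeterMatrix B)

lemma KK_smul_left (t : ℝ) (x y : B → ℝ) : KK M (t • x) y = t * KK M x y := by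
  simp only [KK, Pi.smul_apply, smul_eq_mul, Finset.mul_sum]
  apply Finset.sum_congr rfl
  intro a _
  ring

lemma KK_smul_right (x : B → ℝ) (t : ℝ) (y : B → ℝ) : KK M x (t • y) = t * KK M x y := by
  rw [KK_symm, KK_smul_left, KK_symm]

/-- a vector of norm one is determined, up to sign, by the reflection it defines. -/
lemma beta_pm {β β' : B → ℝ} (hβ : KK M β β = 1) (hβ' : KK M β' β' = 1)
    (h : ∀ x, x - (2 * KK M β x) • β = x - (2 * KK M β' x) • β') : β' = β ∨ β' = -β := by
  have hb := h β
  -- β - 2 β = -β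
  have hl : β - (2 * KK M β β) • β = -β := by
    rw [hβ]
    funext b
    simp only [Pi.sub_apply, Pi.smul_apply, Pi.neg_apply, smul_eq_mul]
    ring
  rw [hl] at hb
  -- -β = β - (2 t) • β' where t = KK β' β
  set t := KK M β' β with hT
  have hb2 : (2 * t) • β' = β + β := by
    have := hb.symm
    funext b
    have hc := congrFun this b
    simp only [Pi.sub_apply, Pi.smul_apply, Pi.neg_apply, Pi.add_apply, smul_eq_mul] at hc ⊢
    linarith
  have hβeq : β = t • β' := by
    funext b
    have hc := congrFun hb2 b
    simp only [Pi.smul_apply, Pi.add_apply, smul_eq_mul] at hc ⊢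
    linarith
  have ht2 : t^2 = 1 := by
    have h1 : KK M β β = t^2 * KK M β' β' := by
      rw [hβeq, KK_smul_left, KK_smul_right]
      ring
    rw [hβ, hβ'] at h1
    linarith [h1]
  have htt : t = 1 ∨ t = -1 := by
    have h1 : t * t = 1 := by rw [← sq]; exact ht2
    exact mul_self_eq_one_iff.mp h1
  rcases htt with h1 | h1
  · left
    rw [hβeq, h1, one_smul]
  · right
    rw [hβeq, h1]
    funext b
    simp

end KKlem

section MAIN

variable {B : Type*} [DecidableEq B] [Fintype B] (M : CoxeterMatrix B)
variable {W : Type*} [Group W] (cs : CoxeterSystem M W)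

lemma Kf_eq_KK (a : B) (y : B → ℝ) : Kf M a y = KK M (ev a) y := (KK_ev_left M a y).symm

/-- conjugates of simple reflections act as reflections in the image root. -/
lemma rho_conj (w : W) (i : B) (x : B → ℝ) :
    rho M cs (w * cs.simple i * w⁻¹) x
      = x - (2 * KK M (rho M cs w (ev i)) x) • (rho M cs w (ev i)) := by
  rw [map_mul, map_mul, Module.End.mul_apply, Module.End.mul_apply, rho_simple, sig_apply]
  rw [map_sub, map_smul]
  have h1 : rho M cs w (rho M cs w⁻¹ x) = x := by
    rw [← Module.End.mul_apply, ← map_mul, mul_inv_cancel, map_one, Module.End.one_apply]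
  rw [h1]
  have h2 := KK_rho M cs w (ev i) (rho M cs w⁻¹ x)
  rw [h1] at h2
  rw [Kf_eq_KK, ← h2]

/-- The main engine : if the conjugacy class of a simple reflection is finite and the Coxeter
diagram is connected, then `W` is finite. -/
theorem main_engine [Infinite W]
    (hirr : (SimpleGraph.fromRel (fun i j : B => M i j ≠ 2)).Connected) (i : B)
    (hfin : {u : W | IsConj (cs.simple i) u}.Finite) : False := by
  set Φ : W → (B → ℝ) := fun w => rho M cs w (ev i) with hΦ
  set Ω : Set (B → ℝ) := Set.range Φ with hΩ
  have hKβ : ∀ w : W, KK M (Φ w) (Φ w) = 1 := by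
    intro w
    rw [hΦ]
    simp only []
    rw [KK_rho, KK_ev_left, Kf_ev, CC_diag]
  -- finiteness of the orbit
  have hΩfin : Ω.Finite := by
    have hsub : Ω ⊆ ⋃ u ∈ {u : W | IsConj (cs.simple i) u},
        {β | KK M β β = 1 ∧ ∀ x, rho M cs u x = x - (2 * KK M β x) • β} := by
      rintro β ⟨w, rfl⟩
      apply Set.mem_biUnion (show w * cs.simple i * w⁻¹ ∈ {u : W | IsConj (cs.simple i) u} from
        isConj_iff.mpr ⟨w, rfl⟩)
      exact ⟨hKβ w, fun x => rho_conj M cs w i x⟩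
    apply Set.Finite.subset _ hsub
    apply Set.Finite.biUnion hfin
    intro u _
    by_cases hne : {β | KK M β β = 1 ∧ ∀ x, rho M cs u x = x - (2 * KK M β x) • β}.Nonempty
    · obtain ⟨β₀, hβ₀⟩ := hne
      apply Set.Finite.subset ((Set.finite_singleton (-β₀)).insert β₀)
      intro β hβ
      have := beta_pm M hβ₀.1 hβ.1 (fun x => by rw [← hβ₀.2 x, ← hβ.2 x])
      rcases this with h | h
      · rw [h]; exact Set.mem_insert _ _
      · rw [h]; right; rfl
    · rw [Set.not_nonempty_iff_eq_empty] at hne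
      rw [hne]
      exact Set.finite_empty
  -- Ω is invariant
  have hΩinv : ∀ (w : W) (β : B → ℝ), β ∈ Ω → rho M cs w β ∈ Ω := by
    rintro w β ⟨v, rfl⟩
    exact ⟨w * v, by rw [hΦ]; simp only []; rw [map_mul, Module.End.mul_apply]⟩
  -- span of Ω is invariant under each sig
  have hspan_inv : ∀ (a : B) (x : B → ℝ), x ∈ Submodule.span ℝ Ω →
      sig M a x ∈ Submodule.span ℝ Ω := by
    intro a x hx
    induction hx using Submodule.span_induction with
    | mem y hy =>
      apply Submodule.subset_span
      have : sig M a y = rho M cs (cs.simple a) y := by rw [rho_simple]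
      rw [this]
      exact hΩinv _ y hy
    | zero => rw [map_zero]; exact Submodule.zero_mem _
    | add y z _ _ hy hz => rw [map_add]; exact Submodule.add_mem _ hy hz
    | smul t y _ hy => rw [map_smul]; exact Submodule.smul_mem _ t hy
  -- all basis vectors lie in the span, by connectivity
  have hstep : ∀ a c : B, (SimpleGraph.fromRel (fun i j : B => M i j ≠ 2)).Adj a c →
      ev a ∈ Submodule.span ℝ Ω → ev c ∈ Submodule.span ℝ Ω := by
    intro a c hadj ha
    have hCC : CC M c a ≠ 0 := by
      obtain ⟨hne, h2⟩ := hadj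
      have hm2 : M c a ≠ 2 := by
        rcases h2 with h | h
        · rw [M.symmetric]; exact h
        · exact h
      rw [CC]
      rcases Nat.eq_zero_or_pos (M c a) with h0 | hpos
      · rw [h0]
        norm_num
      · have hm1 : M c a ≠ 1 := M.off_diagonal c a (Ne.symm hne)
        have hm3 : 3 ≤ M c a := by omega
        have : 0 < Real.cos (π / (M c a : ℝ)) := by
          apply Real.cos_pos_of_mem_Ioo
          constructor
          · have := theta_pos (m := M c a) (by omega)
            have := Real.pi_pos
            linarith
          · have h1 : (2:ℝ) < (M c a : ℝ) := by exact_mod_cast hm3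
            rw [div_lt_iff₀ (by linarith)]
            rw [div_mul_eq_mul_div, lt_div_iff₀ (by norm_num)]
            nlinarith [Real.pi_pos]
        linarith
    have hsig : sig M c (ev a) ∈ Submodule.span ℝ Ω := hspan_inv c _ ha
    have hexpr : ev c = (1 / (2 * CC M c a)) • (ev a - sig M c (ev a)) := by
      rw [sig_ev]
      funext b
      simp only [Pi.smul_apply, Pi.sub_apply, smul_eq_mul]
      field_simp
      ring
    rw [hexpr]
    apply Submodule.smul_mem
    exact Submodule.sub_mem _ ha hsig
  have hbase : ev i ∈ Submodule.span ℝ Ω := by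
    apply Submodule.subset_span
    exact ⟨1, by rw [hΦ]; simp only []; rw [map_one, Module.End.one_apply]⟩
  have hwalkind : ∀ (a b : B) (_ : (SimpleGraph.fromRel (fun i j : B => M i j ≠ 2)).Walk a b),
      ev a ∈ Submodule.span ℝ Ω → ev b ∈ Submodule.span ℝ Ω := by
    intro a b p
    induction p with
    | nil => exact id
    | cons hadj p ih =>
      intro ha
      exact ih (hstep _ _ hadj ha)
  have hall : ∀ b : B, ev b ∈ Submodule.span ℝ Ω := by
    intro b
    obtain ⟨wlk⟩ := hirr.preconnected i b
    exact hwalkind i b wlk hbase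
  have hspan_top : Submodule.span ℝ Ω = ⊤ := by
    rw [eq_top_iff]
    intro x _
    have hx : x = ∑ b : B, x b • ev b := by
      funext c
      rw [Finset.sum_apply]
      simp [ev, Pi.single_apply]
    rw [hx]
    apply Submodule.sum_mem
    intro b _
    exact Submodule.smul_mem _ _ (hall b)
  haveI : Finite ↥Ω := hΩfin.to_subtype
  let ψfun : W → Equiv.Perm ↥Ω := fun w =>
    { toFun := fun β => ⟨rho M cs w β.1, hΩinv w β.1 β.2⟩
      invFun := fun β => ⟨rho M cs w⁻¹ β.1, hΩinv w⁻¹ β.1 β.2⟩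
      left_inv := by
        rintro ⟨β, hβ⟩
        apply Subtype.ext
        exact rho_inv_cancel M cs w β
      right_inv := by
        rintro ⟨β, hβ⟩
        apply Subtype.ext
        show rho M cs w (rho M cs w⁻¹ β) = β
        have h5 := rho_inv_cancel M cs w⁻¹ β
        rwa [inv_inv] at h5 }
  have hψmul : ∀ w1 w2, ψfun (w1 * w2) = ψfun w1 * ψfun w2 := by
    intro w1 w2
    apply Equiv.ext
    rintro ⟨β, hβ⟩
    apply Subtype.ext
    show rho M cs (w1*w2) β = rho M cs w1 (rho M cs w2 β)
    rw [map_mul, Module.End.mul_apply]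
  let ψ : W →* Equiv.Perm ↥Ω := MonoidHom.mk' ψfun hψmul
  have hinj : Function.Injective ψ := by
    apply (injective_iff_map_eq_one ψ).mpr
    intro w hw
    apply rho_faithful M cs
    apply LinearMap.ext_on hspan_top
    intro β hβ
    have h6 := congrArg (fun (e : Equiv.Perm ↥Ω) => (e ⟨β, hβ⟩ : ↥Ω).val) hw
    simp only [Equiv.Perm.coe_one, id_eq] at h6
    exact h6
  haveI : Finite W := Finite.of_injective ψ hinj
  exact not_finite W

end MAIN

end

end Stmt6

/-- In an infinite irreducible Coxeter system `(W, S)` with `S` finite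
(irreducible: the Coxeter diagram, with an edge between `i ≠ j` iff `m(i,j) ≠ 2`,
is connected), every reflection has an infinite conjugacy class. -/
theorem stmt_6 {B W : Type*} [Group W] [Finite B] {M : CoxeterMatrix B}
    (cs : CoxeterSystem M W) [Infinite W]
    (hirr : (SimpleGraph.fromRel (fun i j : B => M i j ≠ 2)).Connected)
    (t : W) (ht : cs.IsReflection t) :
    {u : W | IsConj t u}.Infinite := by
  classical
  cases nonempty_fintype B
  by_contra hfin
  rw [Set.not_infinite] at hfin
  obtain ⟨w0, i, rfl⟩ := ht
  have hst : IsConj (cs.simple i) (w0 * cs.simple i * w0⁻¹) := isConj_iff.mpr ⟨w0, rfl⟩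
  have hC0 : {u : W | IsConj (cs.simple i) u}.Finite := by
    apply hfin.subset
    intro u hu
    exact hst.symm.trans hu
  exact Stmt6.main_engine M cs hirr i hC0
end

section
/- Let (W, S) be a Coxeter system and γ = v s v⁻¹ a reflection with wall M. Then for every w ∈ W, the length of w⁻¹ γ w equals 1 + 2·dist(w, V(M)), where dist(w, V(M)) is the minimal Cayley-graph distance from w to a vertex incident to an edge of M. -/
open List CoxeterSystem
namespace Stmt7Aux

open Classical in
noncomputable def sigmaFun {B W : Type*} [Group W] {M : CoxeterMatrix B}
    (cs : CoxeterSystem M W) (i : B) : W × ZMod 2 → W × ZMod 2 :=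
  fun p => (cs.simple i * p.1 * cs.simple i, p.2 + if p.1 = cs.simple i then 1 else 0)

variable {B W : Type*} [Group W] {M : CoxeterMatrix B} (cs : CoxeterSystem M W)

lemma conj_q (i i' : B) (a : ℤ) :
    cs.simple i' * (cs.simple i * cs.simple i') ^ a * cs.simple i' =
      (cs.simple i * cs.simple i') ^ (-a) := by
  have h0 : (MulAut.conj (cs.simple i')) (cs.simple i * cs.simple i')
      = (cs.simple i * cs.simple i')⁻¹ := by
    simp [MulAut.conj_apply, mul_inv_rev, cs.inv_simple, mul_assoc,
      cs.simple_mul_simple_cancel_left]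
  have h1 := map_zpow (MulAut.conj (cs.simple i')) (cs.simple i * cs.simple i') a
  rw [h0, inv_zpow, ← zpow_neg] at h1
  simpa [MulAut.conj_apply, cs.inv_simple] using h1

lemma move_q (i i' : B) (a : ℤ) :
    cs.simple i' * (cs.simple i * cs.simple i') ^ a =
      (cs.simple i * cs.simple i') ^ (-a) * cs.simple i' := by
  calc cs.simple i' * (cs.simple i * cs.simple i') ^ a
      = (cs.simple i' * (cs.simple i * cs.simple i') ^ a * cs.simple i') * cs.simple i' := by
        rw [cs.simple_mul_simple_cancel_right]
    _ = (cs.simple i * cs.simple i') ^ (-a) * cs.simple i' := by rw [conj_q]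

lemma head_alt (i i' : B) (n : ℕ) :
    (cs.wordProd (alternatingWord i i' n))⁻¹ * cs.simple (if Even n then i' else i)
        * cs.wordProd (alternatingWord i i' n)
      = (cs.simple i * cs.simple i') ^ (-(n:ℤ)) * cs.simple i' := by
  rw [cs.prod_alternatingWord_eq_mul_pow]
  by_cases hn : Even n
  · obtain ⟨e, he⟩ := hn
    have hne : n / 2 = e := by omega
    rw [if_pos ⟨e, he⟩, if_pos ⟨e, he⟩, one_mul, hne]
    calc ((cs.simple i * cs.simple i') ^ e)⁻¹ * cs.simple i'
            * (cs.simple i * cs.simple i') ^ e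
        = (cs.simple i * cs.simple i') ^ (-(e:ℤ))
            * (cs.simple i' * (cs.simple i * cs.simple i') ^ ((e:ℕ):ℤ)) := by
          rw [← zpow_natCast (cs.simple i * cs.simple i') e, ← zpow_neg, mul_assoc]
      _ = (cs.simple i * cs.simple i') ^ (-(e:ℤ))
            * ((cs.simple i * cs.simple i') ^ (-(e:ℤ)) * cs.simple i') := by
          rw [move_q]
      _ = (cs.simple i * cs.simple i') ^ (-(n:ℤ)) * cs.simple i' := by
          rw [← mul_assoc, ← zpow_add]
          congr 2
          omega
  · have hodd : Odd n := Nat.odd_iff.mpr (Nat.not_even_iff.mp hn)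
    obtain ⟨e, he⟩ := hodd
    have hne : n / 2 = e := by omega
    rw [if_neg hn, if_neg hn, hne]
    calc (cs.simple i' * (cs.simple i * cs.simple i') ^ e)⁻¹ * cs.simple i
            * (cs.simple i' * (cs.simple i * cs.simple i') ^ e)
        = (cs.simple i * cs.simple i') ^ (-(e:ℤ))
            * (cs.simple i' * ((cs.simple i * cs.simple i') ^ ((e:ℤ)+1))) := by
          rw [mul_inv_rev, cs.inv_simple, ← zpow_natCast (cs.simple i * cs.simple i') e,
            ← zpow_neg, zpow_add_one]
          simp only [mul_assoc, zpow_natCast, mul_left_inj, mul_right_inj]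
          rw [← mul_assoc, ← pow_succ', ← pow_succ]
      _ = (cs.simple i * cs.simple i') ^ (-(e:ℤ))
            * ((cs.simple i * cs.simple i') ^ (-((e:ℤ)+1)) * cs.simple i') := by
          rw [move_q]
      _ = (cs.simple i * cs.simple i') ^ (-(n:ℤ)) * cs.simple i' := by
          rw [← mul_assoc, ← zpow_add]
          congr 2
          omega

lemma ris_alt (i i' : B) (n : ℕ) :
    cs.rightInvSeq (alternatingWord i i' n)
      = (List.range n).reverse.map
          (fun d : ℕ => (cs.simple i * cs.simple i') ^ (-(d:ℤ)) * cs.simple i') := by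
  induction n with
  | zero => simp [alternatingWord]
  | succ n ih =>
    rw [alternatingWord_succ', rightInvSeq, ih, List.range_succ]
    simp only [List.reverse_append, List.reverse_cons, List.reverse_nil, List.nil_append,
      List.cons_append, List.map_cons]
    congr 1
    · exact head_alt cs i i' n

lemma sigmaFun_involutive (i : B) : Function.Involutive (sigmaFun cs i) := by
  rintro ⟨x, ε⟩
  simp only [sigmaFun]
  have h : (cs.simple i * x * cs.simple i = cs.simple i) ↔ (x = cs.simple i) := by
    constructor
    · intro h
      have := congrArg (fun z => cs.simple i * z * cs.simple i) h
      simpa [← mul_assoc, cs.simple_mul_simple_cancel_right, mul_assoc,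
        cs.simple_mul_simple_cancel_left, cs.simple_mul_simple_self] using this
    · intro h; rw [h]; simp [cs.simple_mul_simple_cancel_right, cs.simple_mul_simple_self]
  refine Prod.ext ?_ ?_
  · simp [← mul_assoc, cs.simple_mul_simple_cancel_right]
  · simp only
    by_cases hx : x = cs.simple i
    · rw [if_pos hx]
      split_ifs with hh
      swap; exact absurd (h.mpr hx) hh
      simp only [eq_true hh, ↓reduceIte]
      rw [add_assoc]
      norm_num
      decide
    · rw [if_neg hx]
      split_ifs with hh
      · exact absurd (h.mp hh) hx
      simp only [eq_false hh, ↓reduceIte]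
      simp

noncomputable def sigma (i : B) : Equiv.Perm (W × ZMod 2) :=
  (sigmaFun_involutive cs i).toPerm

open Classical in
lemma sigma_apply (i : B) (x : W) (ε : ZMod 2) :
    sigma cs i (x, ε) = (cs.simple i * x * cs.simple i,
      ε + if x = cs.simple i then 1 else 0) := rfl

lemma map_range_rev_add {α : Type*} (f : ℕ → α) (m n : ℕ) :
    ((List.range (n + m)).reverse).map f
      = ((List.range n).reverse.map (fun d => f (d + m)))
        ++ ((List.range m).reverse).map f := by
  induction n with
  | zero => simp
  | succ n ih =>
    have h1 : n + 1 + m = (n + m) + 1 := by omega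
    rw [h1, List.range_succ, List.range_succ, List.reverse_append, List.reverse_append]
    simp only [List.reverse_cons, List.reverse_nil, List.nil_append, List.cons_append,
      List.map_cons, ih]

lemma ris_alt_double (i i' : B) :
    cs.rightInvSeq (alternatingWord i i' (2 * M i i'))
      = cs.rightInvSeq (alternatingWord i i' (M i i'))
        ++ cs.rightInvSeq (alternatingWord i i' (M i i')) := by
  rw [ris_alt, ris_alt, two_mul, map_range_rev_add]
  congr 1
  apply List.map_congr_left
  intro d _
  have h1 : ((cs.simple i * cs.simple i') ^ ((M i i' : ℕ) : ℤ)) = 1 := by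
    rw [zpow_natCast, cs.simple_mul_simple_pow]
  congr 1
  push_cast
  rw [neg_add, zpow_add, zpow_neg, zpow_neg, h1, inv_one, mul_one]

open Classical in
lemma prod_sigma (ω : List B) (x : W) (ε : ZMod 2) :
    (List.map (sigma cs) ω).prod (x, ε)
      = (cs.wordProd ω * x * (cs.wordProd ω)⁻¹,
         ε + ((cs.rightInvSeq ω).map (fun z => if z = x then (1:ZMod 2) else 0)).sum) := by
  induction ω generalizing ε with
  | nil => simp
  | cons i ω ih =>
    rw [List.map_cons, List.prod_cons, Equiv.Perm.mul_apply, ih, sigma_apply, rightInvSeq]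
    have hiff : (cs.wordProd ω * x * (cs.wordProd ω)⁻¹ = cs.simple i)
        ↔ ((cs.wordProd ω)⁻¹ * cs.simple i * cs.wordProd ω = x) := by
      constructor
      · intro h; rw [← h]; group
      · intro h; rw [← h]; group
    refine Prod.ext ?_ ?_
    · simp only [cs.wordProd_cons, mul_inv_rev, cs.inv_simple]
      group
    · simp only [List.map_cons, List.sum_cons]
      rw [if_congr hiff rfl rfl]
      have hcomm : ∀ (a b c : ZMod 2), a + b + c = a + (c + b) := by decide
      rw [hcomm]
lemma pow_sigma_eq_prod (i i' : B) (m : ℕ) :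
    (sigma cs i * sigma cs i') ^ m
      = (List.map (sigma cs) (alternatingWord i i' (2 * m))).prod := by
  induction m with
  | zero => simp [alternatingWord]
  | succ m ih =>
    have h2 : 2 * (m + 1) = (2 * m) + 1 + 1 := by omega
    have e1 : (if Even (2 * m + 1) then i' else i) = i := by
      simp [Nat.even_add_one, parity_simps]
    have e2 : (if Even (2 * m) then i' else i) = i' := by simp [parity_simps]
    rw [h2, alternatingWord_succ', alternatingWord_succ', e1, e2, List.map_cons, List.map_cons,
      List.prod_cons, List.prod_cons, ← ih, pow_succ', mul_assoc]

lemma sigma_liftable : M.IsLiftable (sigma cs) := by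
  intro i i'
  apply Equiv.ext
  rintro ⟨x, ε⟩
  rw [pow_sigma_eq_prod, prod_sigma]
  have hπ : cs.wordProd (alternatingWord i i' (2 * M i i')) = 1 := by
    rw [cs.prod_alternatingWord_eq_mul_pow]
    have h1 : Even (2 * M i i') := ⟨M i i', by omega⟩
    have h2 : 2 * M i i' / 2 = M i i' := by omega
    rw [if_pos h1, h2, one_mul, cs.simple_mul_simple_pow]
  rw [hπ, ris_alt_double]
  simp only [List.map_append, List.sum_append]
  have hz : ∀ a : ZMod 2, a + a = 0 := by decide
  simp [hz]

noncomputable def mu : W →* Equiv.Perm (W × ZMod 2) :=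
  cs.lift ⟨sigma cs, sigma_liftable cs⟩

lemma mu_simple (i : B) : mu cs (cs.simple i) = sigma cs i :=
  cs.lift_apply_simple (sigma_liftable cs) i

lemma mu_wordProd (ω : List B) : mu cs (cs.wordProd ω) = (List.map (sigma cs) ω).prod := by
  unfold CoxeterSystem.wordProd
  rw [map_list_prod (mu cs), List.map_map]
  congr 1
  apply List.map_congr_left
  intro i _
  exact mu_simple cs i

open Classical in
noncomputable def eta (w x : W) : ZMod 2 := ((mu cs w) (x, 0)).2

open Classical in
lemma eta_eq_sum (ω : List B) (x : W) :
    eta cs (cs.wordProd ω) x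
      = ((cs.rightInvSeq ω).map (fun z => if z = x then (1:ZMod 2) else 0)).sum := by
  unfold eta
  rw [mu_wordProd, prod_sigma]
  simp

lemma mu_apply (w x : W) (ε : ZMod 2) :
    (mu cs w) (x, ε) = (w * x * w⁻¹, ε + eta cs w x) := by
  obtain ⟨ω, rfl⟩ := cs.wordProd_surjective w
  rw [mu_wordProd, prod_sigma, eta_eq_sum]

lemma eta_mul (u v x : W) :
    eta cs (u * v) x = eta cs u (v * x * v⁻¹) + eta cs v x := by
  have h1 : (mu cs v) (x, 0) = (v * x * v⁻¹, eta cs v x) := by rw [mu_apply, zero_add]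
  have h2 : eta cs (u * v) x = ((mu cs u) ((mu cs v) (x, 0))).2 := by
    unfold eta
    rw [map_mul, Equiv.Perm.mul_apply]
  rw [h2, h1, mu_apply]
  exact add_comm _ _

lemma eta_one (x : W) : eta cs 1 x = 0 := by
  unfold eta
  rw [map_one]
  rfl

lemma eta_inv (y x : W) : eta cs y⁻¹ (y * x * y⁻¹) = eta cs y x := by
  have h := eta_mul cs y⁻¹ y x
  rw [inv_mul_cancel, eta_one] at h
  have hz : ∀ a b : ZMod 2, 0 = a + b → a = b := by decide
  exact hz _ _ h

lemma eta_simple_self (j : B) : eta cs (cs.simple j) (cs.simple j) = 1 := by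
  have h := eta_eq_sum cs [j] (cs.simple j)
  rw [cs.wordProd_singleton] at h
  rw [h]
  simp

lemma eta_reflection {t : W} (ht : cs.IsReflection t) : eta cs t t = 1 := by
  obtain ⟨y, j, rfl⟩ := ht
  set t := y * cs.simple j * y⁻¹ with hts
  have hc : t = y * (cs.simple j * y⁻¹) := by rw [hts, mul_assoc]
  have conj1 : (cs.simple j * y⁻¹) * t * (cs.simple j * y⁻¹)⁻¹ = cs.simple j := by
    rw [hts]
    simp [mul_inv_rev, cs.inv_simple, mul_assoc, cs.simple_mul_simple_cancel_left]
  have conj2 : eta cs (cs.simple j * y⁻¹) t = eta cs (cs.simple j) (y⁻¹ * t * y)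
      + eta cs y⁻¹ t := by
    have := eta_mul cs (cs.simple j) y⁻¹ t
    simpa using this
  have hy : y⁻¹ * t * y = cs.simple j := by
    rw [hts]
    simp [mul_assoc]
  have hy2 : eta cs y⁻¹ t = eta cs y (cs.simple j) := by
    rw [hts]
    exact eta_inv cs y (cs.simple j)
  rw [hc, eta_mul, ← hc, conj1, conj2, hy, hy2, eta_simple_self]
  have hz : ∀ a : ZMod 2, a + (1 + a) = 1 := by decide
  exact hz _

open Classical in
lemma mem_ris_of_eta_ne_zero (ω : List B) (x : W)
    (h : eta cs (cs.wordProd ω) x ≠ 0) : x ∈ cs.rightInvSeq ω := by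
  by_contra hx
  apply h
  rw [eta_eq_sum]
  apply List.sum_eq_zero
  intro z hz
  simp only [List.mem_map] at hz
  obtain ⟨z', hz', rfl⟩ := hz
  rw [if_neg]
  intro he
  exact hx (he ▸ hz')
lemma length_conj_simple_le (y : W) (j : B) :
    cs.length (y * cs.simple j * y⁻¹) ≤ 2 * cs.length y + 1 := by
  calc cs.length (y * cs.simple j * y⁻¹)
      ≤ cs.length (y * cs.simple j) + cs.length y⁻¹ := cs.length_mul_le _ _
    _ ≤ (cs.length y + cs.length (cs.simple j)) + cs.length y⁻¹ :=
        Nat.add_le_add_right (cs.length_mul_le y _) _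
    _ = 2 * cs.length y + 1 := by rw [cs.length_simple, cs.length_inv]; omega

lemma key {t : W} (ht : cs.IsReflection t) :
    ∃ (y : W) (j : B), t = y * cs.simple j * y⁻¹
      ∧ cs.length t = 2 * cs.length y + 1 := by
  obtain ⟨ω, hlen, hw⟩ := cs.exists_reduced_word t
  have hmem : t ∈ cs.rightInvSeq ω := by
    apply mem_ris_of_eta_ne_zero
    rw [← hw, eta_reflection cs ht]
    exact one_ne_zero
  obtain ⟨k, hk, hget⟩ := List.mem_iff_getElem.mp hmem
  have hk' : k < ω.length := by simpa using hk
  have hgetD : (cs.rightInvSeq ω).getD k 1 = t := by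
    rw [List.getD_eq_getElem _ _ hk, hget]
  have hformula := cs.getD_rightInvSeq ω k
  rw [hgetD, List.getElem?_eq_getElem hk'] at hformula
  simp only [Option.map_some, Option.getD_some] at hformula
  have herase : cs.wordProd (ω.eraseIdx k) = 1 := by
    have h2 := cs.wordProd_mul_getD_rightInvSeq ω k
    rw [hgetD, ← hw, ht.mul_self] at h2
    exact h2.symm
  have hsplit : cs.wordProd (ω.take k) * cs.wordProd (ω.drop (k+1)) = 1 := by
    rw [← cs.wordProd_append, ← List.eraseIdx_eq_take_drop_succ]
    exact herase
  have hyinv : cs.wordProd (ω.drop (k+1)) = (cs.wordProd (ω.take k))⁻¹ :=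
    eq_inv_of_mul_eq_one_right hsplit
  refine ⟨cs.wordProd (ω.take k), ω[k], ?_, ?_⟩
  · rw [hformula, hyinv]
    group
  · have hub : cs.length t ≤ 2 * cs.length (cs.wordProd (ω.take k)) + 1 := by
      have := length_conj_simple_le cs (cs.wordProd (ω.take k)) ω[k]
      rw [hformula, hyinv]
      group at this ⊢
      exact this
    have hb1 : cs.length (cs.wordProd (ω.take k)) ≤ k := by
      have := cs.length_wordProd_le (ω.take k)
      rwa [List.length_take, min_eq_left hk'.le] at this
    have hb2 : cs.length (cs.wordProd (ω.take k)) ≤ ω.length - (k+1) := by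
      have h3 := cs.length_wordProd_le (ω.drop (k+1))
      rw [hyinv, cs.length_inv, List.length_drop] at h3
      exact h3
    have hlt : cs.length t = ω.length := by rw [hw]; exact hlen
    omega

end Stmt7Aux

/-- Let `γ = v s v⁻¹` be a reflection in a Coxeter system `(W, S)` with wall
vertex set `V(M) = {x | ∃ j, γ x = x sⱼ}`.  Then for every `w`,
`ℓ(w⁻¹ γ w) = 1 + 2 · dist(w, V(M))`, where `dist(w, V(M))` is the least Cayley-graph
distance `ℓ(w⁻¹ x)` over `x ∈ V(M)`. -/
theorem stmt_7 {B W : Type*} [Group W] {M : CoxeterMatrix B} (cs : CoxeterSystem M W)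
    (v : W) (i : B) (γ : W) (hγ : γ = v * cs.simple i * v⁻¹) (w : W) :
    cs.length (w⁻¹ * γ * w) =
      1 + 2 * sInf ((fun x => cs.length (w⁻¹ * x)) ''
        {x | ∃ j : B, γ * x = x * cs.simple j}) := by
  have ht : cs.IsReflection (w⁻¹ * γ * w) := by
    refine ⟨w⁻¹ * v, i, ?_⟩
    rw [hγ]
    group
  obtain ⟨y, j, hty, hlen⟩ := Stmt7Aux.key cs ht
  have hmem : cs.length y ∈ ((fun x => cs.length (w⁻¹ * x)) ''
      {x | ∃ j : B, γ * x = x * cs.simple j}) := by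
    refine ⟨w * y, ⟨j, ?_⟩, ?_⟩
    · have : γ = w * (w⁻¹ * γ * w) * w⁻¹ := by group
      rw [this, hty]
      group
    · simp [← mul_assoc]
  have hlb : ∀ n ∈ ((fun x => cs.length (w⁻¹ * x)) ''
      {x | ∃ j : B, γ * x = x * cs.simple j}), cs.length y ≤ n := by
    rintro n ⟨x, ⟨j', hx⟩, rfl⟩
    have hγx : γ = x * cs.simple j' * x⁻¹ := by
      rw [← hx]
      group
    have htx : w⁻¹ * γ * w = (w⁻¹ * x) * cs.simple j' * (w⁻¹ * x)⁻¹ := by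
      rw [hγx]
      group
    have := Stmt7Aux.length_conj_simple_le cs (w⁻¹ * x) j'
    rw [← htx, hlen] at this
    show cs.length y ≤ cs.length (w⁻¹ * x)
    omega
  have hinf : sInf ((fun x => cs.length (w⁻¹ * x)) ''
      {x | ∃ j : B, γ * x = x * cs.simple j}) = cs.length y :=
    le_antisymm (Nat.sInf_le hmem) (le_csInf ⟨_, hmem⟩ hlb)
  rw [hinf]
  omega
end

section
/- Let f and g be probability vectors of length n indexed by a finite poset (A, ≤), and suppose both f and g are decreasing functions on A (x ≤ y implies f(x) ≥ f(y), and similarly for g). If for every decreasing subset B ⊆ A one has ∑_{x∈B} f(x) ≥ ∑_{x∈B} g(x), then f majorizes g: for every i, the sum of the i largest values of f is at least the sum of the i largest values of g. -/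
/-- Let `f` and `g` be probability vectors on a finite poset `A`, both
decreasing.  If `∑_{x ∈ B} g ≤ ∑_{x ∈ B} f` for every decreasing (lower) set `B`, then `f`
majorizes `g`: for every `i`, the sum of the `i` largest values of `f` is at least the sum of
the `i` largest values of `g` (stated as: for every `i`-element set `t`, there is an
`i`-element set `u` with `∑_t g ≤ ∑_u f`; equality of total sums holds since both are `1`). -/
theorem stmt_8 {A : Type*} [Fintype A] [PartialOrder A] (f g : A → ℝ)
    (hf0 : ∀ x, 0 ≤ f x) (hg0 : ∀ x, 0 ≤ g x)
    (hf1 : ∑ x, f x = 1) (hg1 : ∑ x, g x = 1)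
    (hfdec : ∀ x y, x ≤ y → f y ≤ f x) (hgdec : ∀ x y, x ≤ y → g y ≤ g x)
    (hdom : ∀ Bset : Finset A, (∀ x y, x ≤ y → y ∈ Bset → x ∈ Bset) →
      ∑ x ∈ Bset, g x ≤ ∑ x ∈ Bset, f x) :
    ∀ t : Finset A, ∃ u : Finset A, u.card = t.card ∧ ∑ x ∈ t, g x ≤ ∑ x ∈ u, f x := by
  classical
  intro t
  -- height function
  set h : A → ℕ := fun z => (Finset.univ.filter (· ≤ z)).card with hh
  have hmono : ∀ x y : A, x < y → h x < h y := by
    intro x y hxy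
    apply Finset.card_lt_card
    constructor
    · intro w hw
      simp only [Finset.mem_filter, Finset.mem_univ, true_and] at hw ⊢
      exact hw.trans hxy.le
    · intro hsub
      have : y ∈ Finset.univ.filter (· ≤ x) :=
        hsub (by simp)
      simp only [Finset.mem_filter, Finset.mem_univ, true_and] at this
      exact absurd (le_antisymm this hxy.le) hxy.ne'
  set S : Finset (Finset A) :=
    Finset.univ.filter (fun u => u.card = t.card ∧ ∑ x ∈ t, g x ≤ ∑ x ∈ u, g x) with hS
  have htS : t ∈ S := by simp [hS]
  obtain ⟨u, huS, hmin⟩ := S.exists_min_image (fun u => ∑ z ∈ u, h z) ⟨t, htS⟩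
  simp only [hS, Finset.mem_filter, Finset.mem_univ, true_and] at huS
  have hlower : ∀ x y, x ≤ y → y ∈ u → x ∈ u := by
    intro x y hxy hyu
    by_contra hxu
    have hxy' : x < y := lt_of_le_of_ne hxy (by rintro rfl; exact hxu hyu)
    set u' : Finset A := insert x (u.erase y) with hu'
    have hxe : x ∉ u.erase y := fun hx => hxu (Finset.mem_of_mem_erase hx)
    have hcard : u'.card = u.card := by
      rw [hu', Finset.card_insert_of_notMem hxe,
        Finset.card_erase_of_mem hyu]
      have : 1 ≤ u.card := Finset.card_pos.mpr ⟨y, hyu⟩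
      omega
    have hsum : ∀ F : A → ℝ, ∑ z ∈ u', F z = ∑ z ∈ u, F z - F y + F x := by
      intro F
      rw [hu', Finset.sum_insert hxe, Finset.sum_erase_eq_sub hyu]
      ring
    have hsumN : ∑ z ∈ u', h z + h y = ∑ z ∈ u, h z + h x := by
      rw [hu', Finset.sum_insert hxe, ← Finset.add_sum_erase u h hyu]
      ring
    have hgxy : g y ≤ g x := hgdec x y hxy
    have hu'S : u' ∈ S := by
      simp only [hS, Finset.mem_filter, Finset.mem_univ, true_and]
      refine ⟨hcard.trans huS.1, ?_⟩
      rw [hsum g]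
      linarith [huS.2]
    have := hmin u' hu'S
    have hhy : h y ≤ ∑ z ∈ u, h z := Finset.single_le_sum (fun i _ => Nat.zero_le _) hyu
    have hlt := hmono x y hxy'
    omega
  refine ⟨u, huS.1, le_trans huS.2 (hdom u hlower)⟩
end

section
/- Consider the continuous-time random walk on ℤ = {…,−1,0,1,…} started at 0, where the only nonzero jump rates are: rate 1 on the edge {0,1} and rate ρ on the edge {−1,0} (all other edges have rate 0). Let f_ρ(t) := ℙ[Z_t = 0]. Then there exists t > 0 with f₃(t) > f₂(t); consequently the expected distance 𝔼|Z_t| = 1 − f_ρ(t) is not monotone increasing in the rates. -/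
/-- Generator of the continuous-time walk on `ℤ` started at `0` whose only nonzero rates are
`ρ` on the edge `{-1, 0}` and `1` on the edge `{0, 1}`; the three effective states
`-1, 0, 1` are encoded as `0, 1, 2 : Fin 3`. -/
noncomputable def Qgen (ρ : ℝ) : Matrix (Fin 3) (Fin 3) ℝ :=
  !![-ρ, ρ, 0; ρ, -(1 + ρ), 1; 0, 1, -1]

/-- `f ρ t = ℙ[Z_t = 0]`, the return probability of the above walk. -/
noncomputable def fRet (ρ t : ℝ) : ℝ :=
  NormedSpace.exp (t • Qgen ρ) 1 1

open Matrix in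
set_option maxHeartbeats 1000000 in
/-- Closed form for the return probability when `ρ = 2`. -/
lemma fRet_two (t : ℝ) :
    fRet 2 t = 1/3 + (2 - Real.sqrt 3)/6 * Real.exp ((Real.sqrt 3 - 3)*t)
      + (2 + Real.sqrt 3)/6 * Real.exp ((-3 - Real.sqrt 3)*t) := by
  set s := Real.sqrt 3 with hsdef
  have hs : s^2 = 3 := Real.sq_sqrt (by norm_num)
  set P : Matrix (Fin 3) (Fin 3) ℝ := !![1,2,2; 1,s-1,-1-s; 1,-1-s,s-1] with hP
  set B : Matrix (Fin 3) (Fin 3) ℝ :=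
    !![1/3,1/3,1/3; 1/6,(s-1)/12,(-1-s)/12; 1/6,(-1-s)/12,(s-1)/12] with hB
  have hPB : P * B = 1 := by
    ext i j
    fin_cases i <;> fin_cases j <;>
      simp [hP, hB, Matrix.mul_apply, Fin.sum_univ_three, Matrix.vecHead, Matrix.vecTail] <;>
      nlinarith [hs]
  have hd : Matrix.diagonal ![(0:ℝ),(s-3)*t,(-3-s)*t] =
      !![0,0,0; 0,(s-3)*t,0; 0,0,(-3-s)*t] := by
    ext i j
    fin_cases i <;> fin_cases j <;> simp [Matrix.diagonal, Matrix.vecHead, Matrix.vecTail]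
  have hu : IsUnit P := by
    rw [Matrix.isUnit_iff_isUnit_det]
    exact Matrix.isUnit_det_of_right_inverse hPB
  have heig : (t • Qgen 2) * P = P * Matrix.diagonal ![(0:ℝ),(s-3)*t,(-3-s)*t] := by
    rw [hd]
    ext i j
    fin_cases i <;> fin_cases j <;>
      simp [hP, Qgen, Matrix.mul_apply, Fin.sum_univ_three, Matrix.vecHead, Matrix.vecTail] <;>
      first
        | ring1
        | linear_combination t * hs
        | linear_combination (-t) * hs
  have key : t • Qgen 2 = P * Matrix.diagonal ![(0:ℝ),(s-3)*t,(-3-s)*t] * P⁻¹ := by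
    rw [← heig, Matrix.mul_assoc, Matrix.mul_nonsing_inv P
      ((Matrix.isUnit_iff_isUnit_det P).mp hu), Matrix.mul_one]
  unfold fRet
  rw [key, Matrix.exp_conj P _ hu, Matrix.exp_diagonal, Matrix.inv_eq_right_inv hPB]
  have hexp : NormedSpace.exp ![(0:ℝ),(s-3)*t,(-3-s)*t] =
      ![1, Real.exp ((s-3)*t), Real.exp ((-3-s)*t)] := by
    funext i
    rw [Pi.coe_exp]
    fin_cases i <;> simp [← Real.exp_eq_exp_ℝ]
  rw [hexp]
  have hd2 : Matrix.diagonal ![(1:ℝ), Real.exp ((s-3)*t), Real.exp ((-3-s)*t)] =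
      !![1,0,0; 0,Real.exp ((s-3)*t),0; 0,0,Real.exp ((-3-s)*t)] := by
    ext i j
    fin_cases i <;> fin_cases j <;> simp [Matrix.diagonal, Matrix.vecHead, Matrix.vecTail]
  rw [hd2]
  simp [hP, hB, Matrix.mul_apply, Fin.sum_univ_three, Matrix.vecHead, Matrix.vecTail]
  linear_combination ((Real.exp ((s-3)*t) + Real.exp ((-3-s)*t))/12) * hs

open Matrix in
set_option maxHeartbeats 1000000 in
/-- Closed form for the return probability when `ρ = 3`. -/
lemma fRet_three (t : ℝ) :
    fRet 3 t = 1/3 + (7 - 2*Real.sqrt 7)/21 * Real.exp ((Real.sqrt 7 - 4)*t)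
      + (7 + 2*Real.sqrt 7)/21 * Real.exp ((-4 - Real.sqrt 7)*t) := by
  set s := Real.sqrt 7 with hsdef
  have hs : s^2 = 7 := Real.sq_sqrt (by norm_num)
  set P : Matrix (Fin 3) (Fin 3) ℝ := !![1,3,3; 1,s-1,-1-s; 1,-2-s,s-2] with hP
  set B : Matrix (Fin 3) (Fin 3) ℝ :=
    !![1/3,1/3,1/3;
       (14-s)/126, (s-1)*(14-s)/378, (-2-s)*(14-s)/378;
       (14+s)/126, (-1-s)*(14+s)/378, (s-2)*(14+s)/378] with hB
  have hPB : P * B = 1 := by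
    ext i j
    fin_cases i <;> fin_cases j <;>
      simp [hP, hB, Matrix.mul_apply, Fin.sum_univ_three, Matrix.vecHead, Matrix.vecTail] <;>
      nlinarith [hs]
  have hd : Matrix.diagonal ![(0:ℝ),(s-4)*t,(-4-s)*t] =
      !![0,0,0; 0,(s-4)*t,0; 0,0,(-4-s)*t] := by
    ext i j
    fin_cases i <;> fin_cases j <;> simp [Matrix.diagonal, Matrix.vecHead, Matrix.vecTail]
  have hu : IsUnit P := by
    rw [Matrix.isUnit_iff_isUnit_det]
    exact Matrix.isUnit_det_of_right_inverse hPB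
  have heig : (t • Qgen 3) * P = P * Matrix.diagonal ![(0:ℝ),(s-4)*t,(-4-s)*t] := by
    rw [hd]
    ext i j
    fin_cases i <;> fin_cases j <;>
      simp [hP, Qgen, Matrix.mul_apply, Fin.sum_univ_three, Matrix.vecHead, Matrix.vecTail] <;>
      first
        | ring1
        | linear_combination t * hs
        | linear_combination (-t) * hs
  have key : t • Qgen 3 = P * Matrix.diagonal ![(0:ℝ),(s-4)*t,(-4-s)*t] * P⁻¹ := by
    rw [← heig, Matrix.mul_assoc, Matrix.mul_nonsing_inv P
      ((Matrix.isUnit_iff_isUnit_det P).mp hu), Matrix.mul_one]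
  unfold fRet
  rw [key, Matrix.exp_conj P _ hu, Matrix.exp_diagonal, Matrix.inv_eq_right_inv hPB]
  have hexp : NormedSpace.exp ![(0:ℝ),(s-4)*t,(-4-s)*t] =
      ![1, Real.exp ((s-4)*t), Real.exp ((-4-s)*t)] := by
    funext i
    rw [Pi.coe_exp]
    fin_cases i <;> simp [← Real.exp_eq_exp_ℝ]
  rw [hexp]
  have hd2 : Matrix.diagonal ![(1:ℝ), Real.exp ((s-4)*t), Real.exp ((-4-s)*t)] =
      !![1,0,0; 0,Real.exp ((s-4)*t),0; 0,0,Real.exp ((-4-s)*t)] := by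
    ext i j
    fin_cases i <;> fin_cases j <;> simp [Matrix.diagonal, Matrix.vecHead, Matrix.vecTail]
  rw [hd2]
  simp [hP, hB, Matrix.mul_apply, Fin.sum_univ_three, Matrix.vecHead, Matrix.vecTail]
  linear_combination ((-(s-16) * Real.exp ((s-4)*t) + (s+16) * Real.exp ((-4-s)*t))/378) * hs

/-- A crude but effective lower bound for the exponential. -/
lemma exp_lb64 (x : ℝ) (h : 0 ≤ 1 + x/64) : (1 + x/64)^64 ≤ Real.exp x := by
  have h1 : 1 + x/64 ≤ Real.exp (x/64) := by linarith [Real.add_one_le_exp (x/64)]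
  calc (1 + x/64)^64 ≤ (Real.exp (x/64))^64 := pow_le_pow_left₀ h h1 64
    _ = Real.exp x := by rw [← Real.exp_nat_mul]; congr 1; push_cast; ring

/-- The key numerical inequality: at time `t = 2` the walk with `ρ = 3` has a strictly larger
return probability than the walk with `ρ = 2`. -/
lemma fRet_lt_at_two : fRet 2 2 < fRet 3 2 := by
  rw [fRet_two, fRet_three]
  have hs : Real.sqrt 3 ^ 2 = 3 := Real.sq_sqrt (by norm_num)
  have hr : Real.sqrt 7 ^ 2 = 7 := Real.sq_sqrt (by norm_num)
  set s := Real.sqrt 3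
  set r := Real.sqrt 7
  have hs0 : 0 ≤ s := Real.sqrt_nonneg 3
  have hr0 : 0 ≤ r := Real.sqrt_nonneg 7
  have hsu : s ≤ 1.7320509 := by nlinarith
  have hsl : 1.7320508 ≤ s := by nlinarith
  have hru : r ≤ 2.6457514 := by nlinarith
  have hrl : 2.6457513 ≤ r := by nlinarith
  have e1 : (12.0235:ℝ) ≤ Real.exp (6 - 2*s) := by
    have hb := exp_lb64 (6 - 2*s) (by nlinarith)
    have mono : ((1 + 2.5358982/64 : ℝ))^64 ≤ (1 + (6 - 2*s)/64)^64 := by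
      apply pow_le_pow_left₀ (by norm_num) (by nlinarith) 64
    have hnum : (12.0235:ℝ) ≤ (1 + 2.5358982/64)^64 := by norm_num
    linarith
  have h1 : Real.exp ((s-3)*2) ≤ 0.08318 := by
    have hmul : Real.exp ((s-3)*2) * Real.exp (6 - 2*s) = 1 := by
      rw [← Real.exp_add]
      norm_num [show (s-3)*2 + (6-2*s) = 0 by ring, Real.exp_zero]
    have hm := mul_le_mul_of_nonneg_left e1 (Real.exp_pos ((s-3)*2)).le
    rw [hmul] at hm
    linarith
  have e2 : (1250:ℝ) ≤ Real.exp (6 + 2*s) := by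
    have hb := exp_lb64 (6 + 2*s) (by nlinarith)
    have mono : ((1 + 9.4641016/64 : ℝ))^64 ≤ (1 + (6 + 2*s)/64)^64 := by
      apply pow_le_pow_left₀ (by norm_num) (by nlinarith) 64
    have hnum : (1250:ℝ) ≤ (1 + 9.4641016/64)^64 := by norm_num
    linarith
  have h2 : Real.exp ((-3-s)*2) ≤ 0.0008 := by
    have hmul : Real.exp ((-3-s)*2) * Real.exp (6 + 2*s) = 1 := by
      rw [← Real.exp_add]
      norm_num [show (-3-s)*2 + (6+2*s) = 0 by ring, Real.exp_zero]
    have hm := mul_le_mul_of_nonneg_left e2 (Real.exp_pos ((-3-s)*2)).le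
    rw [hmul] at hm
    linarith
  have h3 : (0.0628:ℝ) ≤ Real.exp ((r-4)*2) := by
    have hb := exp_lb64 ((r-4)*2) (by nlinarith)
    have mono : ((1 - 2.7084974/64 : ℝ))^64 ≤ (1 + (r-4)*2/64)^64 := by
      apply pow_le_pow_left₀ (by norm_num) (by nlinarith) 64
    have hnum : (0.0628:ℝ) ≤ (1 - 2.7084974/64)^64 := by norm_num
    linarith
  have hA2 : (2-s)/6 * Real.exp ((s-3)*2) ≤ (2-1.7320508)/6 * 0.08318 :=
    mul_le_mul (by linarith) h1 (Real.exp_pos _).le (by norm_num)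
  have hB2 : (2+s)/6 * Real.exp ((-3-s)*2) ≤ (2+1.7320509)/6 * 0.0008 :=
    mul_le_mul (by linarith) h2 (Real.exp_pos _).le (by norm_num)
  have hA3 : (7-2*2.6457514)/21 * 0.0628 ≤ (7-2*r)/21 * Real.exp ((r-4)*2) :=
    mul_le_mul (by linarith) h3 (by norm_num) (by linarith)
  have hB3 : (0:ℝ) ≤ (7+2*r)/21 * Real.exp ((-4-r)*2) := by
    have := (Real.exp_pos ((-4-r)*2)).le
    have h7 : (0:ℝ) ≤ (7+2*r)/21 := by linarith
    exact mul_nonneg h7 this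
  linarith

/-- For the continuous-time walk on `ℤ` started at `0` with rate `1` on the
edge `{0,1}` and rate `ρ` on the edge `{-1,0}` (all other rates `0`), there is a time `t > 0`
at which the return probability with `ρ = 3` exceeds that with `ρ = 2`; hence the expected
distance `𝔼|Z_t| = 1 − f_ρ(t)` is not monotone increasing in the rates. -/
theorem stmt_18 :
    ∃ t : ℝ, 0 < t ∧ fRet 2 t < fRet 3 t ∧ 1 - fRet 3 t < 1 - fRet 2 t := by
  exact ⟨2, by norm_num, fRet_lt_at_two, by linarith [fRet_lt_at_two]⟩
end
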